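/- arXiv:1009.1635 — 8 statements merged into one kernel-verified Lean document; each statement's English description precedes it below -/
import Mathlib

section
/- Geometrization Theorem: For every k-QSAT interaction hypergraph G on N qubits with clauses S_1, …, S_M there is an integer R_G such that (i) for every choice of clause vectors φ = (φ_1, …, φ_M), dim ker H_φ ≥ R_G, and (ii) the set of choices φ for which dim ker H_φ > R_G is contained in the zero locus of a nonzero polynomial in the real and imaginary parts of the components of the φ_m (in particular it has Lebesgue measure zero). Equivalently, the rank of H_φ equals its maximal possible value 2^N − R_G for almost every choice of φ. -/
open scoped BigOperators

noncomputable section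

/-- The matrix of the rank-one projector `|φ⟩⟨φ|` acting on the qubits in the
`k`-element set `S` and as the identity on the remaining qubits. -/
def clauseProj {N : ℕ} (S : Finset (Fin N)) (φ : ({i // i ∈ S} → Fin 2) → ℂ) :
    Matrix (Fin N → Fin 2) (Fin N → Fin 2) ℂ :=
  fun σ τ =>
    (if ∀ i : Fin N, i ∉ S → σ i = τ i then (1 : ℂ) else 0) *
      φ (fun i => σ i.1) * (starRingEnd ℂ) (φ (fun i => τ i.1))

/-- The `k`-QSAT Hamiltonian `H_φ = ∑ m, Π_m` associated to the interaction
hypergraph `S : Fin M → Finset (Fin N)` and the clause vectors `φ m`. -/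
def qsatHam {N M : ℕ} (S : Fin M → Finset (Fin N))
    (φ : ∀ m, ({i // i ∈ S m} → Fin 2) → ℂ) :
    Matrix (Fin N → Fin 2) (Fin N → Fin 2) ℂ :=
  ∑ m, clauseProj (S m) (φ m)

/-- `φ` is a unit vector. -/
def IsUnitVec {α : Type*} [Fintype α] (φ : α → ℂ) : Prop :=
  ∑ x, Complex.normSq (φ x) = 1

/-- The dimension of the zero-energy eigenspace `ker H_φ`. -/
def kerDim {N M : ℕ} (S : Fin M → Finset (Fin N))
    (φ : ∀ m, ({i // i ∈ S m} → Fin 2) → ℂ) : ℕ :=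
  Module.finrank ℂ (LinearMap.ker (Matrix.mulVecLin (qsatHam S φ)))

/-- The real coordinates (real and imaginary parts of all components) of the
family of clause vectors `φ`. -/
def coords {N M : ℕ} (S : Fin M → Finset (Fin N))
    (φ : ∀ m, ({i // i ∈ S m} → Fin 2) → ℂ) :
    ((Σ m : Fin M, ({i // i ∈ S m} → Fin 2)) × Bool) → ℝ :=
  fun v => if v.2 then (φ v.1.1 v.1.2).re else (φ v.1.1 v.1.2).im

/-! The Hamiltonian `H_φ` is Hermitian, so `dim ker H_φ` is the multiplicity of `0` as a root
of its characteristic polynomial, i.e. the first index `j` with `coeff j ≠ 0`. The entries of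
`H_φ` are polynomials in the real coordinates of `φ`, hence so are these coefficients (and they
are real because `H_φ` is Hermitian). Let `R_G` be the least kernel dimension over all unit
`φ`, attained at `φ₀`. The `R_G`-th coefficient is a real polynomial that does not vanish at
`φ₀`, while it vanishes at every `φ` with `dim ker H_φ > R_G`. -/

theorem Matrix.IsHermitian.starRingEnd_charpoly_coeff {R n : Type*} [CommRing R] [StarRing R]
    [Fintype n] [DecidableEq n] {A : Matrix n n R} (hA : A.IsHermitian) (j : ℕ) :
    starRingEnd R (A.charpoly.coeff j) = A.charpoly.coeff j := by
  have h := A.transpose.charpoly_map (starRingEnd R)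
  rw [show A.transpose.map (starRingEnd R) = A.conjTranspose from rfl, hA.eq,
    Matrix.charpoly_transpose] at h
  simpa using congrArg (·.coeff j) h.symm

section Hermitian

open Finset

variable {𝕜 n : Type*} [RCLike 𝕜] [Fintype n] [DecidableEq n] {A : Matrix n n 𝕜}

theorem Matrix.IsHermitian.finrank_ker_mulVecLin (hA : A.IsHermitian) :
    Module.finrank 𝕜 (LinearMap.ker A.mulVecLin) = #{i | hA.eigenvalues i = 0} := by
  have hrank := LinearMap.finrank_range_add_finrank_ker A.mulVecLin
  rw [← Matrix.rank, hA.rank_eq_card_non_zero_eigs, Fintype.card_subtype,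
    Module.finrank_fintype_fun_eq_card, ← Finset.card_univ,
    ← card_filter_add_card_filter_not (s := univ) (fun i => hA.eigenvalues i = 0)] at hrank
  simp only [ne_eq] at hrank
  omega

theorem Matrix.IsHermitian.natTrailingDegree_charpoly (hA : A.IsHermitian) :
    A.charpoly.natTrailingDegree = Module.finrank 𝕜 (LinearMap.ker A.mulVecLin) := by
  classical
  rw [← Polynomial.rootMultiplicity_eq_natTrailingDegree', ← Polynomial.count_roots,
    hA.roots_charpoly_eq_eigenvalues, hA.finrank_ker_mulVecLin, Multiset.count_map,
    Finset.card_def, Finset.filter_val]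
  simp only [Function.comp_apply, eq_comm (a := (0 : 𝕜)), RCLike.ofReal_eq_zero]

end Hermitian

namespace MvPolynomial

variable {σ : Type*}

def rePart (p : MvPolynomial σ ℂ) : MvPolynomial σ ℝ :=
  ∑ d ∈ p.support, monomial d (p.coeff d).re

theorem eval_rePart (p : MvPolynomial σ ℂ) (x : σ → ℝ) :
    eval x p.rePart = (eval (fun i => (x i : ℂ)) p).re := by
  rw [eval_eq (fun i => (x i : ℂ)), Complex.re_sum, rePart, map_sum]
  simp only [eval_monomial, Finsupp.prod, ← Complex.ofReal_pow, ← Complex.ofReal_prod,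
    Complex.re_mul_ofReal]

end MvPolynomial

theorem clauseProj_isHermitian {N : ℕ} (S : Finset (Fin N))
    (φ : ({i // i ∈ S} → Fin 2) → ℂ) : (clauseProj S φ).IsHermitian := by
  ext σ τ
  simp only [Matrix.conjTranspose_apply, clauseProj, star_mul', apply_ite star, star_one,
    star_zero, starRingEnd_apply, star_star, eq_comm (a := σ _)]
  ring

theorem qsatHam_isHermitian {N M : ℕ} (S : Fin M → Finset (Fin N))
    (φ : ∀ m, ({i // i ∈ S m} → Fin 2) → ℂ) : (qsatHam S φ).IsHermitian :=
  isSelfAdjoint_sum _ fun m _ => clauseProj_isHermitian (S m) (φ m)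

section SymbolicHamiltonian

open MvPolynomial

variable {N M : ℕ} (S : Fin M → Finset (Fin N))

def clauseVecPoly (m : Fin M) (x : {i // i ∈ S m} → Fin 2) :
    MvPolynomial ((Σ m : Fin M, ({i // i ∈ S m} → Fin 2)) × Bool) ℂ :=
  X (⟨m, x⟩, true) + C Complex.I * X (⟨m, x⟩, false)

def conjClauseVecPoly (m : Fin M) (x : {i // i ∈ S m} → Fin 2) :
    MvPolynomial ((Σ m : Fin M, ({i // i ∈ S m} → Fin 2)) × Bool) ℂ :=
  X (⟨m, x⟩, true) - C Complex.I * X (⟨m, x⟩, false)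

def qsatHamPoly :
    Matrix (Fin N → Fin 2) (Fin N → Fin 2)
      (MvPolynomial ((Σ m : Fin M, ({i // i ∈ S m} → Fin 2)) × Bool) ℂ) :=
  ∑ m, Matrix.of fun σ τ =>
    (if ∀ i : Fin N, i ∉ S m → σ i = τ i then 1 else 0) *
      clauseVecPoly S m (fun i => σ i.1) * conjClauseVecPoly S m (fun i => τ i.1)

def qsatCharpolyCoeff (j : ℕ) :
    MvPolynomial ((Σ m : Fin M, ({i // i ∈ S m} → Fin 2)) × Bool) ℝ :=
  ((qsatHamPoly S).charpoly.coeff j).rePart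

variable {S} (φ : ∀ m, ({i // i ∈ S m} → Fin 2) → ℂ)

theorem eval_clauseVecPoly (m : Fin M) (x : {i // i ∈ S m} → Fin 2) :
    eval (fun v => (coords S φ v : ℂ)) (clauseVecPoly S m x) = φ m x := by
  apply Complex.ext <;> simp [clauseVecPoly, coords]

theorem eval_conjClauseVecPoly (m : Fin M) (x : {i // i ∈ S m} → Fin 2) :
    eval (fun v => (coords S φ v : ℂ)) (conjClauseVecPoly S m x) = starRingEnd ℂ (φ m x) := by
  apply Complex.ext <;> simp [conjClauseVecPoly, coords]

theorem qsatHamPoly_map_eval :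
    (qsatHamPoly S).map (eval fun v => (coords S φ v : ℂ)) = qsatHam S φ := by
  ext σ τ
  simp [qsatHamPoly, qsatHam, Matrix.sum_apply, clauseProj, apply_ite (eval _),
    eval_clauseVecPoly, eval_conjClauseVecPoly]

theorem ofReal_eval_qsatCharpolyCoeff (j : ℕ) :
    (eval (coords S φ) (qsatCharpolyCoeff S j) : ℂ) = (qsatHam S φ).charpoly.coeff j := by
  rw [qsatCharpolyCoeff, eval_rePart, ← Polynomial.coeff_map, ← Matrix.charpoly_map,
    qsatHamPoly_map_eval, ← Complex.conj_eq_iff_re]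
  exact (qsatHam_isHermitian S φ).starRingEnd_charpoly_coeff j

end SymbolicHamiltonian

theorem natTrailingDegree_charpoly_qsatHam {N M : ℕ} (S : Fin M → Finset (Fin N))
    (φ : ∀ m, ({i // i ∈ S m} → Fin 2) → ℂ) :
    (qsatHam S φ).charpoly.natTrailingDegree = kerDim S φ :=
  (qsatHam_isHermitian S φ).natTrailingDegree_charpoly

theorem isUnitVec_pi_single {α : Type*} [Fintype α] [DecidableEq α] (a : α) :
    IsUnitVec (Pi.single a (1 : ℂ)) := by
  simp [IsUnitVec, Pi.single_apply, apply_ite Complex.normSq]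

theorem geometrization_general (N M : ℕ) (S : Fin M → Finset (Fin N)) :
    ∃ R_G : ℕ,
      (∀ φ : ∀ m, ({i // i ∈ S m} → Fin 2) → ℂ,
        (∀ m, IsUnitVec (φ m)) → R_G ≤ kerDim S φ) ∧
      ∃ p : MvPolynomial ((Σ m : Fin M, ({i // i ∈ S m} → Fin 2)) × Bool) ℝ,
        p ≠ 0 ∧
        ∀ φ : ∀ m, ({i // i ∈ S m} → Fin 2) → ℂ,
          (∀ m, IsUnitVec (φ m)) → R_G < kerDim S φ →
            MvPolynomial.eval (coords S φ) p = 0 := by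
  classical
  set units := {φ : ∀ m, ({i // i ∈ S m} → Fin 2) → ℂ | ∀ m, IsUnitVec (φ m)}
  have hunits : units.Nonempty := ⟨fun _ => Pi.single default 1, fun _ => isUnitVec_pi_single _⟩
  set φ₀ := Function.argminOn (kerDim S) units hunits
  refine ⟨kerDim S φ₀, fun φ hφ => Function.argminOn_le (kerDim S) units (a := φ) hφ,
    qsatCharpolyCoeff S (kerDim S φ₀), fun hp => ?_, fun φ _ hlt => ?_⟩
  · have hcoeff := ofReal_eval_qsatCharpolyCoeff φ₀ (kerDim S φ₀)
    rw [hp, map_zero, Complex.ofReal_zero, ← natTrailingDegree_charpoly_qsatHam] at hcoeff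
    exact (Matrix.charpoly_monic _).ne_zero (Polynomial.trailingCoeff_eq_zero.mp hcoeff.symm)
  · have hcoeff := ofReal_eval_qsatCharpolyCoeff φ (kerDim S φ₀)
    rw [Polynomial.coeff_eq_zero_of_lt_natTrailingDegree
      (hlt.trans_eq (natTrailingDegree_charpoly_qsatHam S φ).symm)] at hcoeff
    exact_mod_cast hcoeff

/-- **Geometrization theorem.**  For every `k`-QSAT interaction hypergraph there is an
integer `R_G` such that every choice of (unit) clause vectors gives `dim ker H_φ ≥ R_G`,
and the set of choices with `dim ker H_φ > R_G` is contained in the zero locus of a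
nonzero polynomial in the real and imaginary parts of the components of the `φ_m`. -/
theorem geometrization (N M k : ℕ) (S : Fin M → Finset (Fin N))
    (hS : ∀ m, (S m).card = k) :
    ∃ R_G : ℕ,
      (∀ φ : ∀ m, ({i // i ∈ S m} → Fin 2) → ℂ,
        (∀ m, IsUnitVec (φ m)) → R_G ≤ kerDim S φ) ∧
      ∃ p : MvPolynomial ((Σ m : Fin M, ({i // i ∈ S m} → Fin 2)) × Bool) ℝ,
        p ≠ 0 ∧
        ∀ φ : ∀ m, ({i // i ∈ S m} → Fin 2) → ℂ,
          (∀ m, IsUnitVec (φ m)) → R_G < kerDim S φ →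
            MvPolynomial.eval (coords S φ) p = 0 :=
  geometrization_general N M S

end
end

section
/- The minimal (equivalently, generic) zero-energy degeneracy of a k-QSAT instance is bounded above by the number of satisfying assignments of any classical k-SAT problem on the same interaction hypergraph: if R_G := min over all choices φ of dim ker H_φ, then for every assignment of a forbidden configuration c_m ∈ {0,1}^{S_m} to each clause m, one has R_G ≤ #{ σ ∈ {0,1}^N : for all m, the restriction of σ to S_m differs from c_m }. -/
open scoped BigOperators

noncomputable section

/-! A classical instance is the special case `φ m = |c m⟩` of the quantum one. Each projector
`|c m⟩⟨c m| ⊗ 1` is then diagonal in the computational basis, with entry `1` at `σ` iff `σ`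
violates clause `m`, so `H_φ` is diagonal with entry the number of clauses violated by `σ`.
Its kernel is spanned by the basis vectors of the satisfying assignments, and `R_G`, a
minimum over all `φ`, is at most this dimension. -/

theorem Matrix.finrank_ker_mulVecLin_diagonal {n K : Type*} [Fintype n] [DecidableEq n] [Field K]
    [DecidableEq K] (d : n → K) :
    Module.finrank K (LinearMap.ker (Matrix.diagonal d).mulVecLin) =
      Fintype.card {i // d i = 0} := by
  have rank_nullity := (Matrix.diagonal d).mulVecLin.finrank_range_add_finrank_ker
  have card_compl := Fintype.card_subtype_compl fun i => d i ≠ 0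
  have rank_eq : Module.finrank K (LinearMap.range (Matrix.diagonal d).mulVecLin) =
      Fintype.card {i // d i ≠ 0} := Matrix.rank_diagonal d
  simp only [not_not] at card_compl
  rw [Module.finrank_fintype_fun_eq_card, rank_eq] at rank_nullity
  omega

theorem isUnitVec_single {α : Type*} [Fintype α] [DecidableEq α] (x : α) :
    IsUnitVec (Pi.single x 1 : α → ℂ) := by
  simp [IsUnitVec, Pi.single_apply, apply_ite]

theorem clauseProj_single {N : ℕ} (S : Finset (Fin N)) (c : {i // i ∈ S} → Fin 2) :
    clauseProj S (Pi.single c 1) =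
      Matrix.diagonal fun σ => if (fun i : {i // i ∈ S} => σ i.1) = c then 1 else 0 := by
  ext σ τ
  rcases eq_or_ne σ τ with rfl | hne
  · by_cases h : (fun i : {i // i ∈ S} => σ i.1) = c <;> simp [clauseProj, h]
  · rw [Matrix.diagonal_apply_ne _ hne]
    simp only [clauseProj, Pi.single_apply]
    split_ifs with hoff hσ hτ <;> try simp
    -- `σ` and `τ` agree off `S` by `hoff` and on `S` because both restrict to `c`
    refine absurd (funext fun i => ?_) hne
    by_cases hi : i ∈ S
    · simpa using congrFun (hσ.trans hτ.symm) ⟨i, hi⟩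
    · exact hoff i hi

theorem qsatHam_single {N M : ℕ} (S : Fin M → Finset (Fin N))
    (c : ∀ m, {i // i ∈ S m} → Fin 2) :
    qsatHam S (fun m => Pi.single (c m) 1) = Matrix.diagonal fun σ =>
      ((Finset.univ.filter fun m => (fun i : {i // i ∈ S m} => σ i.1) = c m).card : ℂ) := by
  simp only [qsatHam, clauseProj_single, Finset.natCast_card_filter]
  ext σ τ
  simp [Matrix.sum_apply, Matrix.diagonal_apply, Finset.sum_ite_irrel]

theorem kerDim_single {N M : ℕ} (S : Fin M → Finset (Fin N))
    (c : ∀ m, {i // i ∈ S m} → Fin 2) :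
    kerDim S (fun m => Pi.single (c m) 1) =
      (Finset.univ.filter fun σ : Fin N → Fin 2 =>
        ∀ m, (fun i : {i // i ∈ S m} => σ i.1) ≠ c m).card := by
  rw [kerDim, qsatHam_single, Matrix.finrank_ker_mulVecLin_diagonal, Fintype.card_subtype]
  simp [Finset.filter_eq_empty_iff]

theorem generic_degeneracy_le_classical_count_general (N M : ℕ)
    (S : Fin M → Finset (Fin N))
    (c : ∀ m, {i // i ∈ S m} → Fin 2) :
    sInf {r : ℕ | ∃ φ : ∀ m, ({i // i ∈ S m} → Fin 2) → ℂ,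
        (∀ m, IsUnitVec (φ m)) ∧ kerDim S φ = r} ≤
      (Finset.univ.filter fun σ : Fin N → Fin 2 =>
        ∀ m, (fun i : {i // i ∈ S m} => σ i.1) ≠ c m).card := by
  rw [← kerDim_single S c]
  exact Nat.sInf_le ⟨_, fun m => isUnitVec_single (c m), rfl⟩

/-- **Classical satisfying assignments bound the generic quantum degeneracy.**
The minimal zero-energy degeneracy `R_G` over all choices of (unit) clause vectors is
at most the number of satisfying assignments of any classical `k`-SAT problem obtained
by assigning a forbidden configuration `c m` to each clause. -/
theorem generic_degeneracy_le_classical_count (N M k : ℕ)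
    (S : Fin M → Finset (Fin N)) (hS : ∀ m, (S m).card = k)
    (c : ∀ m, {i // i ∈ S m} → Fin 2) :
    sInf {r : ℕ | ∃ φ : ∀ m, ({i // i ∈ S m} → Fin 2) → ℂ,
        (∀ m, IsUnitVec (φ m)) ∧ kerDim S φ = r} ≤
      (Finset.univ.filter fun σ : Fin N → Fin 2 =>
        ∀ m, (fun i : {i // i ∈ S m} => σ i.1) ≠ c m).card :=
  generic_degeneracy_le_classical_count_general N M S c

end
end

section
/- Sequential product-state construction: Let G be a k-QSAT interaction hypergraph on N qubits with clauses S_1, …, S_M. Suppose the clauses can be ordered as m_1, …, m_M together with pairwise distinct qubits q_1, …, q_M such that q_j ∈ S_{m_j} and q_j ∉ S_{m_i} for all i < j. Then for EVERY choice of the clause vectors φ_1, …, φ_M there exist nonzero vectors v_1, …, v_N ∈ ℂ² with Π_m (v_1 ⊗ ⋯ ⊗ v_N) = 0 for every clause m; in particular H_φ (v_1 ⊗ ⋯ ⊗ v_N) = 0. -/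
open scoped BigOperators

noncomputable section

/-- The product state `v_1 ⊗ ⋯ ⊗ v_N`. -/
def prodState {N : ℕ} (v : Fin N → Fin 2 → ℂ) : (Fin N → Fin 2) → ℂ :=
  fun σ => ∏ i, v i (σ i)

/-!
The overlap `⟨φ_m, ⊗_{i ∈ S_m} v_i⟩` is linear in each single-qubit vector `v_i`, and every
linear functional on `ℂ²` vanishes on some nonzero vector. Treat the clauses in the given order
and, at step `j`, choose `v_{q_j}` so that the overlap of clause `m_j` vanishes. The later steps
only change the qubits `q_t`, `t > j`, none of which lies in `S_{m_j}`, so that overlap stays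
zero. Finally `Π_m (⊗ v) = φ_m ⊗ (⊗_{i ∉ S_m} v_i)` times the overlap, so `Π_m` annihilates
the product state.
-/

open Matrix

section ClauseOverlap

variable {ι β K : Type*} [DecidableEq ι] [Fintype β] [CommRing K]

def clauseOverlap (S : Finset ι) (ψ : ({i // i ∈ S} → β) → K) (v : ι → β → K) : K :=
  ∑ τ, ψ τ * ∏ i : {i // i ∈ S}, v i (τ i)

theorem clauseOverlap_congr {S : Finset ι} (ψ : ({i // i ∈ S} → β) → K)
    {v w : ι → β → K} (h : ∀ i ∈ S, v i = w i) :
    clauseOverlap S ψ v = clauseOverlap S ψ w := by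
  unfold clauseOverlap
  refine Finset.sum_congr rfl fun τ _ => ?_
  rw [Finset.prod_congr rfl fun i _ => by rw [h i i.2]]

theorem clauseOverlap_update [DecidableEq β] {S : Finset ι} (ψ : ({i // i ∈ S} → β) → K)
    (v : ι → β → K) {a : ι} (ha : a ∈ S) (x : β → K) :
    clauseOverlap S ψ (Function.update v a x) =
      x ⬝ᵥ fun b => clauseOverlap S ψ (Function.update v a (Pi.single b 1)) := by
  have hsplit : ∀ (y : β → K) (τ : {i // i ∈ S} → β),
      ∏ i : {i // i ∈ S}, Function.update v a y i (τ i) =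
        y (τ ⟨a, ha⟩) * ∏ i ∈ ({⟨a, ha⟩}ᶜ : Finset {i // i ∈ S}), v i (τ i) := by
    intro y τ
    rw [Fintype.prod_eq_mul_prod_compl ⟨a, ha⟩, Function.update_self]
    congr 1
    refine Finset.prod_congr rfl fun i hi => ?_
    rw [Function.update_of_ne]
    simpa [Subtype.ext_iff] using hi
  simp only [clauseOverlap, dotProduct, hsplit, Finset.mul_sum]
  rw [Finset.sum_comm]
  refine Finset.sum_congr rfl fun τ _ => ?_
  simp [Pi.single_apply, mul_left_comm]

theorem exists_ne_zero_clauseOverlap_update_eq_zero [DecidableEq β] [Nontrivial β] [Nontrivial K]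
    {S : Finset ι} (ψ : ({i // i ∈ S} → β) → K) (v : ι → β → K) {a : ι} (ha : a ∈ S) :
    ∃ x ≠ 0, clauseOverlap S ψ (Function.update v a x) = 0 := by
  obtain ⟨x, hx, hxc⟩ := exists_ne_zero_dotProduct_eq_zero
    fun b => clauseOverlap S ψ (Function.update v a (Pi.single b 1))
  exact ⟨x, hx, by rw [clauseOverlap_update ψ v ha, hxc]⟩

end ClauseOverlap

theorem exists_forall_clauseOverlap_eq_zero {ι β K : Type*} [DecidableEq ι] [Fintype β]
    [DecidableEq β] [Nontrivial β] [CommRing K] [Nontrivial K] {M : ℕ}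
    (S : Fin M → Finset ι) (ψ : ∀ j, ({i // i ∈ S j} → β) → K) (q : Fin M → ι)
    (hq_mem : ∀ j, q j ∈ S j) (hq_fresh : ∀ i j, i < j → q j ∉ S i) :
    ∃ v : ι → β → K, (∀ i, v i ≠ 0) ∧ ∀ j, clauseOverlap (S j) (ψ j) v = 0 := by
  suffices h : ∀ n ≤ M, ∃ v : ι → β → K, (∀ i, v i ≠ 0) ∧
      ∀ j : Fin M, (j : ℕ) < n → clauseOverlap (S j) (ψ j) v = 0 by
    obtain ⟨v, hv_ne, hv⟩ := h M le_rfl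
    exact ⟨v, hv_ne, fun j => hv j j.2⟩
  intro n
  induction n with
  | zero =>
    exact fun _ => ⟨fun _ => 1, fun _ => one_ne_zero, fun j h => absurd h (Nat.not_lt_zero j)⟩
  | succ n ih =>
    intro hn
    obtain ⟨v, hv_ne, hv⟩ := ih (Nat.le_of_succ_le hn)
    let j₀ : Fin M := ⟨n, hn⟩
    obtain ⟨x, hx_ne, hx⟩ := exists_ne_zero_clauseOverlap_update_eq_zero (ψ j₀) v (hq_mem j₀)
    refine ⟨Function.update v (q j₀) x, ?_, fun j hj => ?_⟩
    · intro i
      rcases eq_or_ne i (q j₀) with rfl | hi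
      · simpa using hx_ne
      · simpa [hi] using hv_ne i
    rcases Nat.lt_succ_iff_lt_or_eq.mp hj with hj | hj
    · rw [clauseOverlap_congr (ψ j) fun i hi => Function.update_of_ne ?_ x v, hv j hj]
      rintro rfl
      exact hq_fresh j j₀ hj hi
    · obtain rfl : j = j₀ := Fin.ext hj
      exact hx

theorem Fintype.sum_ite_eqOn_compl {ι β R : Type*} [Fintype ι] [DecidableEq ι] [Fintype β]
    [DecidableEq β] [AddCommMonoid R] (S : Finset ι) (σ : ι → β) (F : ({i // i ∈ S} → β) → R) :
    ∑ τ : ι → β, (if ∀ i, i ∉ S → σ i = τ i then F (fun i => τ i) else 0) = ∑ ρ, F ρ := by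
  let e := Equiv.piEquivPiSubtypeProd (· ∈ S) fun _ => β
  rw [← e.symm.sum_comp, Fintype.sum_prod_type]
  refine Finset.sum_congr rfl fun ρ _ => ?_
  have hagree : ∀ κ : {i // i ∉ S} → β,
      (∀ i, i ∉ S → σ i = e.symm (ρ, κ) i) ↔ (fun i : {i // i ∉ S} => σ i) = κ := by
    simp only [funext_iff, Subtype.forall]
    exact fun κ => forall₂_congr fun i hi => by simp [e, hi]
  simp only [hagree]
  simp [e]

theorem clauseProj_mulVec_prodState {N : ℕ} (S : Finset (Fin N))
    (φ : ({i // i ∈ S} → Fin 2) → ℂ) (v : Fin N → Fin 2 → ℂ) (σ : Fin N → Fin 2) :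
    (clauseProj S φ *ᵥ prodState v) σ =
      φ (fun i => σ i) * (∏ i : {i // i ∉ S}, v i (σ i)) *
        clauseOverlap S (fun τ => starRingEnd ℂ (φ τ)) v := by
  have hterm : ∀ τ, clauseProj S φ σ τ * prodState v τ =
      if ∀ i, i ∉ S → σ i = τ i then
        φ (fun i => σ i) * (∏ i : {i // i ∉ S}, v i (σ i)) *
          (starRingEnd ℂ (φ fun i => τ i) * ∏ i : {i // i ∈ S}, v i (τ i))
      else 0 := by
    intro τ
    unfold clauseProj prodState
    split_ifs with hagree
    · have hcompl : ∏ i : {i // i ∉ S}, v i (τ i) = ∏ i : {i // i ∉ S}, v i (σ i) :=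
        Finset.prod_congr rfl fun i _ => by rw [hagree i i.2]
      have hsplit : ∏ i, v i (τ i) =
          (∏ i : {i // i ∈ S}, v i (τ i)) * ∏ i : {i // i ∉ S}, v i (σ i) := by
        rw [← hcompl]
        convert (Fintype.prod_subtype_mul_prod_subtype (· ∈ S) _).symm
      rw [hsplit]
      ring
    · simp
  simp only [mulVec, dotProduct, hterm]
  rw [clauseOverlap, Finset.mul_sum]
  convert Fintype.sum_ite_eqOn_compl S σ fun ρ => φ (fun i => σ i) *
    (∏ i : {i // i ∉ S}, v i (σ i)) * (starRingEnd ℂ (φ ρ) * ∏ i : {i // i ∈ S}, v i (ρ i))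

theorem sequential_product_state_general (N M : ℕ)
    (S : Fin M → Finset (Fin N))
    (ord : Equiv.Perm (Fin M)) (q : Fin M → Fin N)
    (hq_mem : ∀ j, q j ∈ S (ord j))
    (hq_fresh : ∀ i j : Fin M, i < j → q j ∉ S (ord i)) :
    ∀ φ : ∀ m, ({i // i ∈ S m} → Fin 2) → ℂ, (∀ m, IsUnitVec (φ m)) →
      ∃ v : Fin N → Fin 2 → ℂ, (∀ i, v i ≠ 0) ∧
        (∀ m, Matrix.mulVec (clauseProj (S m) (φ m)) (prodState v) = 0) ∧
        Matrix.mulVec (qsatHam S φ) (prodState v) = 0 := by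
  intro φ _
  obtain ⟨v, hv_ne, hv⟩ := exists_forall_clauseOverlap_eq_zero (fun j => S (ord j))
    (fun j τ => starRingEnd ℂ (φ (ord j) τ)) q hq_mem hq_fresh
  have hclause : ∀ m, clauseProj (S m) (φ m) *ᵥ prodState v = 0 := by
    intro m
    obtain ⟨j, rfl⟩ := ord.surjective m
    funext σ
    rw [clauseProj_mulVec_prodState, hv j, mul_zero, Pi.zero_apply]
  refine ⟨v, hv_ne, hclause, ?_⟩
  rw [qsatHam, Matrix.sum_mulVec]
  exact Finset.sum_eq_zero fun m _ => hclause m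

/-- **Sequential product-state construction.**  If the clauses can be ordered
`ord 0, ord 1, …` together with pairwise distinct qubits `q j ∈ S (ord j)` such that
`q j` does not occur in any earlier clause `S (ord i)`, `i < j`, then for *every*
choice of clause vectors there is a satisfying product state, annihilated by every
individual clause projector and hence by `H_φ`. -/
theorem sequential_product_state (N M k : ℕ)
    (S : Fin M → Finset (Fin N)) (hS : ∀ m, (S m).card = k)
    (ord : Equiv.Perm (Fin M)) (q : Fin M → Fin N)
    (hq_inj : Function.Injective q)
    (hq_mem : ∀ j, q j ∈ S (ord j))
    (hq_fresh : ∀ i j : Fin M, i < j → q j ∉ S (ord i)) :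
    ∀ φ : ∀ m, ({i // i ∈ S m} → Fin 2) → ℂ, (∀ m, IsUnitVec (φ m)) →
      ∃ v : Fin N → Fin 2 → ℂ, (∀ i, v i ≠ 0) ∧
        (∀ m, Matrix.mulVec (clauseProj (S m) (φ m)) (prodState v) = 0) ∧
        Matrix.mulVec (qsatHam S φ) (prodState v) = 0 :=
  sequential_product_state_general N M S ord q hq_mem hq_fresh

end
end

section
/- Subadditivity of the minimal kernel dimension: Let G_1 and G_2 be k-QSAT interaction hypergraphs on the same N qubits, and let G_1 ∪ G_2 denote the hypergraph whose clause list is the concatenation of the two clause lists. Writing R(G) := min over all choices of clause vectors φ of dim ker H_φ, one has R(G_1 ∪ G_2) · 2^N ≤ R(G_1) · R(G_2). -/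
open scoped BigOperators

noncomputable section

/-!
Every `qsatHam` is positive semidefinite, so the kernel of a sum of two of them is the
intersection of their kernels. Conjugating all clause vectors of `G₂` by a Pauli operator `W`
(a tensor product of one-qubit unitaries, so clause projectors stay clause projectors) keeps
them unit vectors and moves `ker H₂` to `W (ker H₂)`. For orthogonal projections `Pᵢ`
onto `Vᵢ`, `dim (V₁ ∩ W V₂) ≤ tr (P₁ W P₂ W†)`, and averaging over the `4^N` Pauli operators
twirls `P₂` into `(tr P₂ / 2^N) • 1`. Hence some `W` gives
`dim (V₁ ∩ W V₂) · 2^N ≤ dim V₁ · dim V₂`; taking `V₁, V₂` of minimal dimension proves the claim.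
-/

open Matrix
open scoped ComplexOrder MatrixOrder

namespace Matrix

variable {n 𝕜 : Type*} [Fintype n] [RCLike 𝕜]

theorem PosSemidef.ker_add {A B : Matrix n n 𝕜} (hA : A.PosSemidef) (hB : B.PosSemidef) :
    LinearMap.ker (A + B).mulVecLin = LinearMap.ker A.mulVecLin ⊓ LinearMap.ker B.mulVecLin := by
  ext v
  simp only [LinearMap.mem_ker, mulVecLin_apply, Submodule.mem_inf, add_mulVec]
  refine ⟨fun h => ?_, fun ⟨hAv, hBv⟩ => by rw [hAv, hBv, add_zero]⟩
  have hsum : star v ⬝ᵥ A *ᵥ v + star v ⬝ᵥ B *ᵥ v = 0 := by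
    rw [← dotProduct_add, h, dotProduct_zero]
  obtain ⟨hAv, hBv⟩ := (add_eq_zero_iff_of_nonneg (hA.dotProduct_mulVec_nonneg v)
    (hB.dotProduct_mulVec_nonneg v)).mp hsum
  exact ⟨(hA.dotProduct_mulVec_zero_iff v).mp hAv, (hB.dotProduct_mulVec_zero_iff v).mp hBv⟩

theorem trace_le_trace_mul {P Q R : Matrix n n 𝕜} (hP : IsStarProjection P)
    (hQ : IsStarProjection Q) (hR : IsStarProjection R) (hQP : Q * P = P) (hRP : R * P = P) :
    P.trace ≤ (Q * R).trace := by
  have hPQ : P * Q = P := by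
    simpa [hP.isSelfAdjoint.star_eq, hQ.isSelfAdjoint.star_eq] using congr(star $(hQP))
  have hPR : P * R = P := by
    simpa [hP.isSelfAdjoint.star_eq, hR.isSelfAdjoint.star_eq] using congr(star $(hRP))
  have hle : R * P * R ≤ R * Q * R := by
    simpa [hR.isSelfAdjoint.star_eq] using
      star_left_conjugate_le_conjugate (sub_nonneg.mp (hP.sub_of_mul_eq_left hQ hPQ).nonneg) R
  have htr := (nonneg_iff_posSemidef.mp (sub_nonneg.mpr hle)).trace_nonneg
  rwa [trace_sub, sub_nonneg, hRP, hPR, mul_assoc, trace_mul_comm, mul_assoc,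
    hR.isIdempotentElem.eq] at htr

theorem mul_eq_of_range_le {P Q : Matrix n n 𝕜} (hQ : IsIdempotentElem Q)
    (h : LinearMap.range P.mulVecLin ≤ LinearMap.range Q.mulVecLin) : Q * P = P := by
  refine ext_iff_mulVec.mpr fun v => ?_
  obtain ⟨w, hw⟩ := h ⟨v, rfl⟩
  simp only [mulVecLin_apply] at hw
  rw [← mulVec_mulVec, ← hw, mulVec_mulVec, hQ.eq]

theorem exists_isometry_range_eq (V : Submodule 𝕜 (n → 𝕜)) :
    ∃ U : Matrix n (Fin (Module.finrank 𝕜 V)) 𝕜,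
      Uᴴ * U = 1 ∧ LinearMap.range U.mulVecLin = V := by
  let e : (n → 𝕜) ≃ₗ[𝕜] EuclideanSpace 𝕜 n := (WithLp.linearEquiv 2 𝕜 (n → 𝕜)).symm
  let W : Submodule 𝕜 (EuclideanSpace 𝕜 n) := V.map (e : (n → 𝕜) →ₗ[𝕜] EuclideanSpace 𝕜 n)
  have hW : Module.finrank 𝕜 W = Module.finrank 𝕜 V := LinearEquiv.finrank_map_eq e V
  let b := (stdOrthonormalBasis 𝕜 W).reindex (finCongr hW)
  let U : Matrix n (Fin (Module.finrank 𝕜 V)) 𝕜 := of fun i j => (b j : EuclideanSpace 𝕜 n) i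
  have hU : Uᴴ * U = 1 := by
    ext j j'
    rw [mul_apply, one_apply, ← orthonormal_iff_ite.mp b.orthonormal j j', Submodule.coe_inner,
      EuclideanSpace.inner_eq_star_dotProduct, dotProduct_comm]
    rfl
  refine ⟨U, hU, Submodule.eq_of_le_of_finrank_eq ?_ ?_⟩
  · rw [range_mulVecLin, Submodule.span_le, Set.range_subset_iff]
    intro j
    obtain ⟨v, hv, hvb⟩ := Submodule.mem_map.mp (b j).2
    have hcol : U.col j = v := by
      ext i
      simp [U, ← hvb, e]
    rwa [SetLike.mem_coe, hcol]
  · have hinj : Function.Injective U.mulVecLin := fun x y hxy => by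
      simpa [mulVec_mulVec, hU] using congrArg (Uᴴ *ᵥ ·) hxy
    rw [LinearMap.finrank_range_of_inj hinj, Module.finrank_fin_fun]

theorem exists_isStarProjection_range_eq [DecidableEq n] (V : Submodule 𝕜 (n → 𝕜)) :
    ∃ P : Matrix n n 𝕜, IsStarProjection P ∧ LinearMap.range P.mulVecLin = V ∧
      P.trace = Module.finrank 𝕜 V := by
  obtain ⟨U, hU, hV⟩ := exists_isometry_range_eq V
  refine ⟨U * Uᴴ, ⟨?_, ?_⟩, le_antisymm ?_ ?_ |>.trans hV, ?_⟩
  · rw [IsIdempotentElem, Matrix.mul_assoc, ← Matrix.mul_assoc Uᴴ, hU, Matrix.one_mul]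
  · simp [IsSelfAdjoint, star_eq_conjTranspose]
  · rintro _ ⟨v, rfl⟩
    exact ⟨Uᴴ *ᵥ v, by simp [mulVec_mulVec]⟩
  · rintro _ ⟨v, rfl⟩
    exact ⟨U *ᵥ v, by simp [mulVec_mulVec, hU]⟩
  · rw [trace_mul_comm, hU, trace_one, Fintype.card_fin]

theorem range_conj_eq_ker_conj [DecidableEq n] {A B W : Matrix n n 𝕜}
    (hW : W ∈ unitary (Matrix n n 𝕜))
    (h : LinearMap.range A.mulVecLin = LinearMap.ker B.mulVecLin) :
    LinearMap.range (W * A * star W).mulVecLin = LinearMap.ker (W * B * star W).mulVecLin := by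
  have hWW (v : n → 𝕜) : star W *ᵥ W *ᵥ v = v := by
    rw [mulVec_mulVec, Unitary.star_mul_self_of_mem hW, one_mulVec]
  have hWW' (v : n → 𝕜) : W *ᵥ star W *ᵥ v = v := by
    rw [mulVec_mulVec, Unitary.mul_star_self_of_mem hW, one_mulVec]
  ext v
  simp only [LinearMap.mem_range, LinearMap.mem_ker, mulVecLin_apply, ← mulVec_mulVec]
  constructor
  · rintro ⟨x, rfl⟩
    have hx : A *ᵥ star W *ᵥ x ∈ LinearMap.ker B.mulVecLin := h ▸ ⟨_, rfl⟩
    rw [LinearMap.mem_ker, mulVecLin_apply] at hx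
    rw [hWW, hx, mulVec_zero]
  · intro hv
    have hv' : B *ᵥ star W *ᵥ v = 0 := by rw [← hWW (B *ᵥ _), hv, mulVec_zero]
    obtain ⟨x, hx⟩ : star W *ᵥ v ∈ LinearMap.range A.mulVecLin := h ▸ hv'
    rw [mulVecLin_apply] at hx
    exact ⟨W *ᵥ x, by rw [hWW, hx, hWW']⟩

theorem finrank_ker_add_le_re_trace_mul [DecidableEq n] {A B P Q : Matrix n n 𝕜}
    (hA : A.PosSemidef) (hB : B.PosSemidef) (hP : IsStarProjection P) (hQ : IsStarProjection Q)
    (hPA : LinearMap.range P.mulVecLin = LinearMap.ker A.mulVecLin)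
    (hQB : LinearMap.range Q.mulVecLin = LinearMap.ker B.mulVecLin) :
    (Module.finrank 𝕜 (LinearMap.ker (A + B).mulVecLin) : ℝ) ≤ RCLike.re (P * Q).trace := by
  obtain ⟨K, hK, hKker, hKtr⟩ :=
    exists_isStarProjection_range_eq (LinearMap.ker (A + B).mulVecLin)
  rw [hA.ker_add hB] at hKker
  have hle := trace_le_trace_mul hK hP hQ
    (mul_eq_of_range_le hP.isIdempotentElem (hKker ▸ hPA ▸ inf_le_left))
    (mul_eq_of_range_le hQ.isIdempotentElem (hKker ▸ hQB ▸ inf_le_right))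
  rw [hKtr] at hle
  simpa using (RCLike.le_iff_re_im.mp hle).1

end Matrix

theorem IsStarProjection.conj_unitary {R : Type*} [Ring R] [StarRing R] {p u : R}
    (hp : IsStarProjection p) (hu : u ∈ unitary R) : IsStarProjection (u * p * star u) where
  isIdempotentElem := by
    rw [IsIdempotentElem, mul_assoc, mul_assoc, ← mul_assoc (star u), ← mul_assoc (star u),
      Unitary.star_mul_self_of_mem hu, one_mul, ← mul_assoc p, hp.isIdempotentElem.eq, mul_assoc]
  isSelfAdjoint := hp.isSelfAdjoint.conjugate u

section Pauli

variable {ι : Type*} [Fintype ι]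

def bitSign (x y : Fin 2) : ℂ := (-1) ^ (x * y : Fin 2).val

theorem bitSign_mul_self (x y : Fin 2) : bitSign x y * bitSign x y = 1 := by
  fin_cases x <;> fin_cases y <;> simp [bitSign]

theorem conj_bitSign (x y : Fin 2) : starRingEnd ℂ (bitSign x y) = bitSign x y := by
  fin_cases x <;> fin_cases y <;> simp [bitSign]

theorem sum_bitSign_mul_bitSign (y z : Fin 2) :
    ∑ x, bitSign x y * bitSign x z = if y = z then 2 else 0 := by
  fin_cases y <;> fin_cases z <;> norm_num [bitSign, Fin.sum_univ_two]

def pauliSign (b σ : ι → Fin 2) : ℂ := ∏ i, bitSign (b i) (σ i)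

theorem pauliSign_mul_self (b σ : ι → Fin 2) : pauliSign b σ * pauliSign b σ = 1 := by
  simp [pauliSign, ← Finset.prod_mul_distrib, bitSign_mul_self]

theorem conj_pauliSign (b σ : ι → Fin 2) : starRingEnd ℂ (pauliSign b σ) = pauliSign b σ := by
  simp [pauliSign, conj_bitSign]

theorem normSq_pauliSign (b σ : ι → Fin 2) : Complex.normSq (pauliSign b σ) = 1 := by
  rw [← Complex.ofReal_inj, Complex.normSq_eq_conj_mul_self, conj_pauliSign, pauliSign_mul_self,
    Complex.ofReal_one]

variable [DecidableEq ι]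

theorem sum_pauliSign_mul_pauliSign (σ τ : ι → Fin 2) :
    ∑ b, pauliSign b σ * pauliSign b τ = if σ = τ then 2 ^ Fintype.card ι else 0 := by
  simp only [pauliSign, ← Finset.prod_mul_distrib]
  rw [← Fintype.prod_sum (fun i x => bitSign x (σ i) * bitSign x (τ i))]
  simp only [sum_bitSign_mul_bitSign, Finset.prod_ite_zero, Finset.prod_const, Finset.card_univ,
    funext_iff, Finset.mem_univ, true_imp_iff]

/-- `Z^b X^a` in the usual notation for Pauli operators. -/
def pauli (a b : ι → Fin 2) : Matrix (ι → Fin 2) (ι → Fin 2) ℂ :=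
  of fun σ τ => if τ = σ + a then pauliSign b σ else 0

theorem pauli_mul_mul_star_apply (a b : ι → Fin 2) (A : Matrix (ι → Fin 2) (ι → Fin 2) ℂ)
    (σ τ : ι → Fin 2) :
    (pauli a b * A * star (pauli a b)) σ τ = pauliSign b σ * pauliSign b τ * A (σ + a) (τ + a) := by
  simp only [pauli, star_eq_conjTranspose, mul_apply, of_apply, ite_mul, zero_mul,
    Finset.sum_ite_eq', Finset.mem_univ, if_true, conjTranspose_apply, RCLike.star_def,
    apply_ite (starRingEnd ℂ), conj_pauliSign, map_zero, mul_ite, mul_zero]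
  ring

theorem pauli_mem_unitary (a b : ι → Fin 2) :
    pauli a b ∈ unitary (Matrix (ι → Fin 2) (ι → Fin 2) ℂ) := by
  refine (mem_unitaryGroup_iff).mpr ?_
  ext σ τ
  have h := pauli_mul_mul_star_apply a b 1 σ τ
  rw [Matrix.mul_one] at h
  rw [h]
  by_cases hστ : σ = τ
  · subst hστ
    simp [pauliSign_mul_self]
  · simp [hστ]

theorem sum_pauli_mul_mul_star (A : Matrix (ι → Fin 2) (ι → Fin 2) ℂ) :
    ∑ a, ∑ b, pauli a b * A * star (pauli a b) = (2 ^ Fintype.card ι * A.trace) • 1 := by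
  ext σ τ
  simp only [Matrix.sum_apply, pauli_mul_mul_star_apply, ← Finset.sum_mul,
    sum_pauliSign_mul_pauliSign]
  by_cases h : σ = τ
  · subst h
    have : ∑ a, A (σ + a) (σ + a) = A.trace :=
      Fintype.sum_equiv (Equiv.addLeft σ) _ (fun ρ => A ρ ρ) fun _ => rfl
    simp [← Finset.mul_sum, this]
  · simp [h]

theorem exists_pauli_re_trace_mul_le (P Q : Matrix (ι → Fin 2) (ι → Fin 2) ℂ) :
    ∃ a b, 2 ^ Fintype.card ι * (P * (pauli a b * Q * star (pauli a b))).trace.re ≤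
      (P.trace * Q.trace).re := by
  have htr : ∑ a, ∑ b, (P * (pauli a b * Q * star (pauli a b))).trace =
      2 ^ Fintype.card ι * (P.trace * Q.trace) := by
    simp_rw [← trace_sum, ← Matrix.mul_sum, sum_pauli_mul_mul_star, Matrix.mul_smul,
      Matrix.mul_one, trace_smul, smul_eq_mul]
    ring
  have hsum : ∑ p : (ι → Fin 2) × (ι → Fin 2),
      2 ^ Fintype.card ι * (P * (pauli p.1 p.2 * Q * star (pauli p.1 p.2))).trace.re =
      ∑ _p : (ι → Fin 2) × (ι → Fin 2), (P.trace * Q.trace).re := by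
    rw [Finset.sum_const, Finset.card_univ, Fintype.card_prod, Fintype.card_fun,
      Fintype.card_fin, nsmul_eq_mul, Fintype.sum_prod_type]
    simp_rw [← Finset.mul_sum, ← Complex.re_sum, htr, ← Complex.ofReal_ofNat,
      ← Complex.ofReal_pow, Complex.re_ofReal_mul]
    push_cast
    ring
  obtain ⟨p, -, hp⟩ := Finset.exists_le_of_sum_le Finset.univ_nonempty hsum.le
  exact ⟨p.1, p.2, hp⟩

end Pauli

section QSat

variable {N : ℕ}

theorem clauseProj_posSemidef (S : Finset (Fin N)) (φ : ({i // i ∈ S} → Fin 2) → ℂ) :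
    (clauseProj S φ).PosSemidef := by
  let B : Matrix ({i // i ∉ S} → Fin 2) (Fin N → Fin 2) ℂ :=
    of fun c τ => if (fun i => τ i.1) = c then star (φ fun i => τ i.1) else 0
  convert posSemidef_conjTranspose_mul_self B
  ext σ τ
  have hoff : (fun i : {i // i ∉ S} => σ i.1) = (fun i => τ i.1) ↔ ∀ i ∉ S, σ i = τ i := by
    simp [funext_iff]
  simp only [clauseProj, mul_apply, conjTranspose_apply, B, of_apply, apply_ite star, star_star,
    star_zero, mul_ite, mul_zero, ite_mul, zero_mul, Finset.sum_ite_eq, Finset.mem_univ, if_true,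
    one_mul, ← hoff]
  rfl

theorem qsatHam_posSemidef {M : ℕ} (S : Fin M → Finset (Fin N))
    (φ : ∀ m, ({i // i ∈ S m} → Fin 2) → ℂ) : (qsatHam S φ).PosSemidef :=
  posSemidef_sum _ fun m _ => clauseProj_posSemidef (S m) (φ m)

theorem pauliSign_mul_pauliSign_of_eqOn_compl {ι : Type*} [Fintype ι] {S : Finset ι}
    (b : ι → Fin 2) {σ τ : ι → Fin 2} (h : ∀ i ∉ S, σ i = τ i) :
    pauliSign b σ * pauliSign b τ =
      pauliSign (fun i : S => b i) (fun i => σ i) *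
        pauliSign (fun i : S => b i) (fun i => τ i) := by
  simp only [pauliSign, ← Finset.prod_mul_distrib]
  rw [Finset.prod_coe_sort S (fun i => bitSign (b i) (σ i) * bitSign (b i) (τ i))]
  refine (Finset.prod_subset (Finset.subset_univ S) fun i _ hi => ?_).symm
  rw [h i hi, bitSign_mul_self]

def pauliRotate (S : Finset (Fin N)) (a b : Fin N → Fin 2) (φ : ({i // i ∈ S} → Fin 2) → ℂ) :
    ({i // i ∈ S} → Fin 2) → ℂ :=
  fun x => pauliSign (fun i : S => b i) x * φ (fun i => x i + a i)

theorem IsUnitVec.pauliRotate {S : Finset (Fin N)} {φ : ({i // i ∈ S} → Fin 2) → ℂ}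
    (hφ : IsUnitVec φ) (a b : Fin N → Fin 2) : IsUnitVec (pauliRotate S a b φ) := by
  unfold IsUnitVec _root_.pauliRotate
  simp_rw [Complex.normSq_mul, normSq_pauliSign, one_mul]
  exact (Fintype.sum_equiv (Equiv.addRight fun i : S => a i) _ _ fun _ => rfl).trans hφ

theorem pauli_mul_clauseProj_mul_star (a b : Fin N → Fin 2) (S : Finset (Fin N))
    (φ : ({i // i ∈ S} → Fin 2) → ℂ) :
    pauli a b * clauseProj S φ * star (pauli a b) = clauseProj S (pauliRotate S a b φ) := by
  ext σ τ
  rw [pauli_mul_mul_star_apply]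
  simp only [clauseProj, pauliRotate, Pi.add_apply, add_left_inj]
  split_ifs with h
  · rw [pauliSign_mul_pauliSign_of_eqOn_compl b h, map_mul, conj_pauliSign]
    ring
  · simp

theorem qsatHam_pauliRotate {M : ℕ} (a b : Fin N → Fin 2) (S : Fin M → Finset (Fin N))
    (φ : ∀ m, ({i // i ∈ S m} → Fin 2) → ℂ) :
    qsatHam S (fun m => pauliRotate (S m) a b (φ m)) =
      pauli a b * qsatHam S φ * star (pauli a b) := by
  simp only [qsatHam, Matrix.mul_sum, Matrix.sum_mul, pauli_mul_clauseProj_mul_star]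

theorem exists_qsatHam_append {M₁ M₂ : ℕ} (S₁ : Fin M₁ → Finset (Fin N))
    (S₂ : Fin M₂ → Finset (Fin N)) {φ₁ : ∀ m, ({i // i ∈ S₁ m} → Fin 2) → ℂ}
    {φ₂ : ∀ m, ({i // i ∈ S₂ m} → Fin 2) → ℂ} (hφ₁ : ∀ m, IsUnitVec (φ₁ m))
    (hφ₂ : ∀ m, IsUnitVec (φ₂ m)) :
    ∃ φ : ∀ m, ({i // i ∈ Fin.append S₁ S₂ m} → Fin 2) → ℂ,
      (∀ m, IsUnitVec (φ m)) ∧ qsatHam (Fin.append S₁ S₂) φ = qsatHam S₁ φ₁ + qsatHam S₂ φ₂ := by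
  have h : ∀ m, ∃ ψ : ({i // i ∈ Fin.append S₁ S₂ m} → Fin 2) → ℂ, IsUnitVec ψ ∧
      clauseProj _ ψ = Fin.append (fun m => clauseProj (S₁ m) (φ₁ m))
        (fun m => clauseProj (S₂ m) (φ₂ m)) m := by
    refine Fin.addCases (fun m => ?_) (fun m => ?_)
    · rw [Fin.append_left, Fin.append_left]
      exact ⟨φ₁ m, hφ₁ m, rfl⟩
    · rw [Fin.append_right, Fin.append_right]
      exact ⟨φ₂ m, hφ₂ m, rfl⟩
  choose φ hφ hproj using h
  refine ⟨φ, hφ, ?_⟩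
  simp only [qsatHam, hproj, Fin.sum_univ_add, Fin.append_left, Fin.append_right]

theorem exists_isUnitVec {α : Type*} [Fintype α] [DecidableEq α] (x : α) :
    ∃ φ : α → ℂ, IsUnitVec φ :=
  ⟨Pi.single x 1, by simp [IsUnitVec, Pi.single_apply, apply_ite]⟩

/-- The quantity `R(G)`. -/
def minKerDim {M : ℕ} (S : Fin M → Finset (Fin N)) : ℕ :=
  sInf {r : ℕ | ∃ φ : ∀ m, ({i // i ∈ S m} → Fin 2) → ℂ, (∀ m, IsUnitVec (φ m)) ∧ kerDim S φ = r}

theorem minKerDim_le_kerDim {M : ℕ} {S : Fin M → Finset (Fin N)}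
    {φ : ∀ m, ({i // i ∈ S m} → Fin 2) → ℂ} (hφ : ∀ m, IsUnitVec (φ m)) :
    minKerDim S ≤ kerDim S φ :=
  Nat.sInf_le ⟨φ, hφ, rfl⟩

theorem exists_kerDim_eq_minKerDim {M : ℕ} (S : Fin M → Finset (Fin N)) :
    ∃ φ : ∀ m, ({i // i ∈ S m} → Fin 2) → ℂ, (∀ m, IsUnitVec (φ m)) ∧ kerDim S φ = minKerDim S := by
  choose φ hφ using fun m => exists_isUnitVec (fun _ : {i // i ∈ S m} => (0 : Fin 2))
  exact Nat.sInf_mem (s := {r : ℕ | ∃ φ : ∀ m, ({i // i ∈ S m} → Fin 2) → ℂ,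
    (∀ m, IsUnitVec (φ m)) ∧ kerDim S φ = r}) ⟨_, φ, hφ, rfl⟩

theorem exists_kerDim_append_mul_le {M₁ M₂ : ℕ} (S₁ : Fin M₁ → Finset (Fin N))
    (S₂ : Fin M₂ → Finset (Fin N)) {φ₁ : ∀ m, ({i // i ∈ S₁ m} → Fin 2) → ℂ}
    {φ₂ : ∀ m, ({i // i ∈ S₂ m} → Fin 2) → ℂ} (hφ₁ : ∀ m, IsUnitVec (φ₁ m))
    (hφ₂ : ∀ m, IsUnitVec (φ₂ m)) :
    ∃ φ : ∀ m, ({i // i ∈ Fin.append S₁ S₂ m} → Fin 2) → ℂ, (∀ m, IsUnitVec (φ m)) ∧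
      kerDim (Fin.append S₁ S₂) φ * 2 ^ N ≤ kerDim S₁ φ₁ * kerDim S₂ φ₂ := by
  obtain ⟨P₁, hP₁, hP₁ker, hP₁tr⟩ :=
    exists_isStarProjection_range_eq (LinearMap.ker (qsatHam S₁ φ₁).mulVecLin)
  obtain ⟨P₂, hP₂, hP₂ker, hP₂tr⟩ :=
    exists_isStarProjection_range_eq (LinearMap.ker (qsatHam S₂ φ₂).mulVecLin)
  obtain ⟨a, b, hab⟩ := exists_pauli_re_trace_mul_le P₁ P₂
  let φ₂' := fun m => pauliRotate (S₂ m) a b (φ₂ m)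
  obtain ⟨φ, hφ, hH⟩ := exists_qsatHam_append S₁ S₂ hφ₁ (fun m => (hφ₂ m).pauliRotate a b)
  have hP₂'ker : LinearMap.range (pauli a b * P₂ * star (pauli a b)).mulVecLin =
      LinearMap.ker (qsatHam S₂ φ₂').mulVecLin := by
    rw [qsatHam_pauliRotate]
    exact range_conj_eq_ker_conj (pauli_mem_unitary a b) hP₂ker
  have hle := finrank_ker_add_le_re_trace_mul (qsatHam_posSemidef S₁ φ₁)
    (qsatHam_posSemidef S₂ φ₂') hP₁ (hP₂.conj_unitary (pauli_mem_unitary a b)) hP₁ker hP₂'ker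
  rw [← hH] at hle
  rw [hP₁tr, hP₂tr, Fintype.card_fin] at hab
  refine ⟨φ, hφ, ?_⟩
  have key : (kerDim (Fin.append S₁ S₂) φ : ℝ) * 2 ^ N ≤ kerDim S₁ φ₁ * kerDim S₂ φ₂ := by
    simp only [← Complex.ofReal_natCast, ← Complex.ofReal_mul, Complex.ofReal_re] at hab
    rw [RCLike.re_to_complex] at hle
    unfold kerDim
    nlinarith [pow_pos (two_pos : (0 : ℝ) < 2) N]
  exact_mod_cast key

end QSat

theorem minimal_kernel_dim_subadditive_general (N M₁ M₂ : ℕ)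
    (S₁ : Fin M₁ → Finset (Fin N)) (S₂ : Fin M₂ → Finset (Fin N)) :
    sInf {r : ℕ | ∃ φ : ∀ m : Fin (M₁ + M₂),
          ({i // i ∈ Fin.append S₁ S₂ m} → Fin 2) → ℂ,
        (∀ m, IsUnitVec (φ m)) ∧ kerDim (Fin.append S₁ S₂) φ = r} * 2 ^ N ≤
      sInf {r : ℕ | ∃ φ : ∀ m : Fin M₁, ({i // i ∈ S₁ m} → Fin 2) → ℂ,
          (∀ m, IsUnitVec (φ m)) ∧ kerDim S₁ φ = r} *
      sInf {r : ℕ | ∃ φ : ∀ m : Fin M₂, ({i // i ∈ S₂ m} → Fin 2) → ℂ,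
          (∀ m, IsUnitVec (φ m)) ∧ kerDim S₂ φ = r} := by
  show minKerDim (Fin.append S₁ S₂) * 2 ^ N ≤ minKerDim S₁ * minKerDim S₂
  obtain ⟨φ₁, hφ₁, hd₁⟩ := exists_kerDim_eq_minKerDim S₁
  obtain ⟨φ₂, hφ₂, hd₂⟩ := exists_kerDim_eq_minKerDim S₂
  obtain ⟨φ, hφ, hle⟩ := exists_kerDim_append_mul_le S₁ S₂ hφ₁ hφ₂
  rw [← hd₁, ← hd₂]
  exact (Nat.mul_le_mul_right _ (minKerDim_le_kerDim hφ)).trans hle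

/-- **Subadditivity of the minimal kernel dimension.**  If `R(G)` denotes the minimum
over all choices of (unit) clause vectors of `dim ker H_φ`, and `G₁ ∪ G₂` is the
concatenation of the clause lists of `G₁` and `G₂`, then
`R(G₁ ∪ G₂) · 2^N ≤ R(G₁) · R(G₂)`. -/
theorem minimal_kernel_dim_subadditive (N k M₁ M₂ : ℕ)
    (S₁ : Fin M₁ → Finset (Fin N)) (S₂ : Fin M₂ → Finset (Fin N))
    (hS₁ : ∀ m, (S₁ m).card = k) (hS₂ : ∀ m, (S₂ m).card = k) :
    sInf {r : ℕ | ∃ φ : ∀ m : Fin (M₁ + M₂),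
          ({i // i ∈ Fin.append S₁ S₂ m} → Fin 2) → ℂ,
        (∀ m, IsUnitVec (φ m)) ∧ kerDim (Fin.append S₁ S₂) φ = r} * 2 ^ N ≤
      sInf {r : ℕ | ∃ φ : ∀ m : Fin M₁, ({i // i ∈ S₁ m} → Fin 2) → ℂ,
          (∀ m, IsUnitVec (φ m)) ∧ kerDim S₁ φ = r} *
      sInf {r : ℕ | ∃ φ : ∀ m : Fin M₂, ({i // i ∈ S₂ m} → Fin 2) → ℂ,
          (∀ m, IsUnitVec (φ m)) ∧ kerDim S₂ φ = r} :=
  minimal_kernel_dim_subadditive_general N M₁ M₂ S₁ S₂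

end
end

section
/- Symmetric Lovász local lemma: Let (Ω, P) be a probability space and B_1, …, B_M events with P(B_m) ≤ p for all m. Suppose for each m there is a set Γ(m) ⊆ {1, …, M} \ {m} with |Γ(m)| ≤ d such that B_m is mutually independent of the events outside Γ(m) ∪ {m}, in the sense that for every J ⊆ {1, …, M} \ ({m} ∪ Γ(m)), P(B_m ∩ ⋂_{j∈J} B_jᶜ) = P(B_m) · P(⋂_{j∈J} B_jᶜ). If e · p · (d+1) ≤ 1 (where e is Euler's constant), then P(⋂_{m=1}^M B_mᶜ) > 0. -/
/-!
Fix `c ∈ [0, 1)` with `P (B m) ≤ c (1 - c)^d`. By strong induction on `S`, for `m ∉ S` the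
event `B m` has probability at most `c` given that none of the `B j`, `j ∈ S`, occurs. Split
`S` into the neighbours `S ∩ Γ m` and the rest `S \ Γ m`: independence bounds the numerator
by `P (B m) · P(none of S \ Γ m)`, while removing the neighbours one at a time costs a factor
`1 - c` each by the induction hypothesis, so the denominator is at least
`(1 - c)^d · P(none of S \ Γ m)`. The same peeling applied to all events gives
`P(none of the B m) ≥ (1 - c)^M > 0`. For `d ≥ 1` the choice `c = 1/(d + 1)` works because
`(1 + 1/d)^d ≤ e`.
-/

open MeasureTheory Finset

def noneOf {Ω ι : Type*} (B : ι → Set Ω) (S : Finset ι) : Set Ω := ⋂ j ∈ S, (B j)ᶜ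

section noneOf

variable {Ω ι : Type*} (B : ι → Set Ω)

@[simp]
theorem noneOf_empty : noneOf B ∅ = Set.univ := by simp [noneOf]

theorem noneOf_univ [Fintype ι] : noneOf B Finset.univ = ⋂ i, (B i)ᶜ := by simp [noneOf]

theorem noneOf_insert [DecidableEq ι] (i : ι) (S : Finset ι) :
    noneOf B (insert i S) = noneOf B S \ B i := by
  rw [noneOf, Finset.set_biInter_insert, Set.sdiff_eq, Set.inter_comm, noneOf]

variable {B}

theorem noneOf_anti {S T : Finset ι} (h : S ⊆ T) : noneOf B T ⊆ noneOf B S :=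
  Set.biInter_subset_biInter_left (coe_subset.2 h)

variable [MeasurableSpace Ω] (P : Measure Ω) [IsFiniteMeasure P]

theorem measureReal_noneOf_insert_add [DecidableEq ι] {i : ι} (hB : MeasurableSet (B i))
    (S : Finset ι) :
    P.real (noneOf B (insert i S)) + P.real (B i ∩ noneOf B S) = P.real (noneOf B S) := by
  rw [noneOf_insert, Set.inter_comm]
  exact measureReal_sdiff_add_inter hB

theorem one_sub_pow_mul_measureReal_noneOf_le [DecidableEq ι] (hB : ∀ i, MeasurableSet (B i))
    {c : ℝ} (hc : c ≤ 1) (T F : Finset ι)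
    (hF : ∀ i ∈ F, ∀ G ⊆ F.erase i,
      P.real (B i ∩ noneOf B (T ∪ G)) ≤ c * P.real (noneOf B (T ∪ G))) :
    (1 - c) ^ #F * P.real (noneOf B T) ≤ P.real (noneOf B (T ∪ F)) := by
  induction F using Finset.induction_on with
  | empty => simp
  | @insert i F hiF ih =>
    have hF' : ∀ j ∈ F, ∀ G ⊆ F.erase j,
        P.real (B j ∩ noneOf B (T ∪ G)) ≤ c * P.real (noneOf B (T ∪ G)) :=
      fun j hj G hG ↦ hF j (mem_insert_of_mem hj) G
        (hG.trans (erase_subset_erase j (subset_insert i F)))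
    have hi := hF i (mem_insert_self i F) F (by rw [erase_insert hiF])
    have hsplit := measureReal_noneOf_insert_add P (hB i) (T ∪ F)
    rw [Finset.union_insert, card_insert_of_notMem hiF, pow_succ']
    calc (1 - c) * (1 - c) ^ #F * P.real (noneOf B T)
        ≤ (1 - c) * P.real (noneOf B (T ∪ F)) := by
          rw [mul_assoc]; exact mul_le_mul_of_nonneg_left (ih hF') (by linarith)
      _ ≤ P.real (noneOf B (insert i (T ∪ F))) := by linarith

theorem measureReal_inter_noneOf_le [DecidableEq ι] (hB : ∀ i, MeasurableSet (B i))
    {c : ℝ} {d : ℕ} (hc₀ : 0 ≤ c) (hc₁ : c ≤ 1)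
    (hp : ∀ m, P.real (B m) ≤ c * (1 - c) ^ d)
    {Γ : ι → Finset ι} (hΓ : ∀ m, #(Γ m) ≤ d)
    (hindep : ∀ m, ∀ J : Finset ι, m ∉ J → (∀ j ∈ J, j ∉ Γ m) →
      P (B m ∩ noneOf B J) = P (B m) * P (noneOf B J))
    (S : Finset ι) : ∀ m ∉ S, P.real (B m ∩ noneOf B S) ≤ c * P.real (noneOf B S) := by
  induction S using Finset.strongInduction with | H S ih => ?_
  intro m hm
  have hfar : P.real (B m ∩ noneOf B S) ≤ c * (1 - c) ^ d * P.real (noneOf B (S \ Γ m)) :=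
    calc P.real (B m ∩ noneOf B S) ≤ P.real (B m ∩ noneOf B (S \ Γ m)) :=
          measureReal_mono (Set.inter_subset_inter_right _ (noneOf_anti sdiff_subset))
      _ = P.real (B m) * P.real (noneOf B (S \ Γ m)) := by
          simp only [measureReal_def]
          rw [hindep m _ (fun h ↦ hm (mem_sdiff.1 h).1) (fun j hj ↦ (mem_sdiff.1 hj).2),
            ENNReal.toReal_mul]
      _ ≤ c * (1 - c) ^ d * P.real (noneOf B (S \ Γ m)) :=
          mul_le_mul_of_nonneg_right (hp m) measureReal_nonneg
  have hnear : (1 - c) ^ #(S ∩ Γ m) * P.real (noneOf B (S \ Γ m)) ≤ P.real (noneOf B S) := by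
    have := one_sub_pow_mul_measureReal_noneOf_le P hB hc₁ (S \ Γ m) (S ∩ Γ m)
      fun i hi G hG ↦ by
        obtain ⟨hiS, hiΓ⟩ := mem_inter.1 hi
        have hiG : i ∉ S \ Γ m ∪ G := by
          simp only [Finset.mem_union, mem_sdiff, not_or, not_and, not_not]
          exact ⟨fun _ ↦ hiΓ, fun h ↦ notMem_erase i _ (hG h)⟩
        have hsub : S \ Γ m ∪ G ⊆ S :=
          union_subset sdiff_subset (hG.trans ((erase_subset i _).trans inter_subset_left))
        exact ih _ ((ssubset_iff_of_subset hsub).2 ⟨i, hiS, hiG⟩) i hiG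
    rwa [sdiff_union_inter] at this
  have hpow : (1 - c) ^ d ≤ (1 - c) ^ #(S ∩ Γ m) :=
    pow_le_pow_of_le_one (by linarith) (by linarith)
      ((card_le_card inter_subset_right).trans (hΓ m))
  calc P.real (B m ∩ noneOf B S) ≤ c * (1 - c) ^ d * P.real (noneOf B (S \ Γ m)) := hfar
    _ ≤ c * ((1 - c) ^ #(S ∩ Γ m) * P.real (noneOf B (S \ Γ m))) := by
        rw [mul_assoc]
        exact mul_le_mul_of_nonneg_left (mul_le_mul_of_nonneg_right hpow measureReal_nonneg) hc₀
    _ ≤ c * P.real (noneOf B S) := mul_le_mul_of_nonneg_left hnear hc₀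

theorem one_sub_pow_card_le_measureReal_noneOf [IsProbabilityMeasure P] [DecidableEq ι]
    (hB : ∀ i, MeasurableSet (B i)) {c : ℝ} (hc : c ≤ 1)
    (hcond : ∀ S : Finset ι, ∀ m ∉ S,
      P.real (B m ∩ noneOf B S) ≤ c * P.real (noneOf B S))
    (S : Finset ι) :
    (1 - c) ^ #S ≤ P.real (noneOf B S) := by
  simpa using one_sub_pow_mul_measureReal_noneOf_le P hB hc ∅ S
    fun i _ G hG ↦ hcond _ i (by simpa using fun h ↦ (notMem_erase i S) (hG h))

end noneOf

theorem exists_le_mul_one_sub_pow (d : ℕ) {p : ℝ} (h : Real.exp 1 * p * (d + 1) ≤ 1) :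
    ∃ c : ℝ, 0 ≤ c ∧ c < 1 ∧ p ≤ c * (1 - c) ^ d := by
  have he : 1 < Real.exp 1 := Real.one_lt_exp_iff.2 one_pos
  rcases d.eq_zero_or_pos with rfl | hd
  · rw [Nat.cast_zero, zero_add, mul_one] at h
    exact ⟨max p 0, le_max_right p 0, max_lt (by nlinarith) one_pos, by simp⟩
  have hd' : (d : ℝ) ≠ 0 := by positivity
  have hinv : (1 - 1 / (d + 1 : ℝ)) ^ d * (1 + (d : ℝ)⁻¹) ^ d = 1 := by
    rw [← mul_pow]; field_simp; simp [hd']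
  have hbase : 0 ≤ 1 - 1 / (d + 1 : ℝ) := by
    rw [sub_nonneg, div_le_one (by positivity)]; linarith
  have hq : 1 ≤ Real.exp 1 * (1 - 1 / (d + 1 : ℝ)) ^ d := by
    calc (1 : ℝ) = (1 - 1 / (d + 1 : ℝ)) ^ d * (1 + (d : ℝ)⁻¹) ^ d := hinv.symm
      _ ≤ (1 - 1 / (d + 1 : ℝ)) ^ d * Real.exp 1 :=
          mul_le_mul_of_nonneg_left Real.one_add_inv_pow_le_exp (pow_nonneg hbase d)
      _ = _ := mul_comm _ _
  refine ⟨1 / (d + 1), by positivity, by rw [div_lt_one (by positivity)]; simpa, ?_⟩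
  rw [one_div_mul_eq_div, le_div_iff₀ (by positivity)]
  exact le_of_mul_le_mul_left (by linarith) (Real.exp_pos 1)

theorem lovasz_local_lemma_general {Ω : Type*} [MeasurableSpace Ω]
    (P : Measure Ω) [IsProbabilityMeasure P]
    (M : ℕ) (B : Fin M → Set Ω) (hB : ∀ m, MeasurableSet (B m))
    (p : ℝ) (hp : ∀ m, P (B m) ≤ ENNReal.ofReal p)
    (d : ℕ) (Γ : Fin M → Finset (Fin M))
    (hΓ_card : ∀ m, (Γ m).card ≤ d)
    (h_indep : ∀ m, ∀ J : Finset (Fin M), m ∉ J → (∀ j ∈ J, j ∉ Γ m) →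
      P (B m ∩ ⋂ j ∈ J, (B j)ᶜ) = P (B m) * P (⋂ j ∈ J, (B j)ᶜ))
    (hLLL : Real.exp 1 * p * (d + 1) ≤ 1) :
    0 < P (⋂ m, (B m)ᶜ) := by
  obtain ⟨c, hc₀, hc₁, hpc⟩ := exists_le_mul_one_sub_pow d hLLL
  have hBc : ∀ m, P.real (B m) ≤ c * (1 - c) ^ d := fun m ↦
    (ENNReal.toReal_le_of_le_ofReal (le_max_right p 0)
      ((hp m).trans (ENNReal.ofReal_le_ofReal (le_max_left p 0)))).trans
      (max_le hpc (mul_nonneg hc₀ (pow_nonneg (by linarith) d)))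
  have hcond := measureReal_inter_noneOf_le P hB hc₀ hc₁.le hBc hΓ_card h_indep
  have hpos : 0 < P.real (noneOf B Finset.univ) :=
    (pow_pos (by linarith) _).trans_le
      (one_sub_pow_card_le_measureReal_noneOf P hB hc₁.le hcond Finset.univ)
  rw [noneOf_univ] at hpos
  exact ENNReal.toReal_pos_iff.1 hpos |>.1

/-- **Symmetric Lovász local lemma.**  If each of the events `B m` has probability at
most `p`, each `B m` is mutually independent of all the events outside `Γ m ∪ {m}`
with `|Γ m| ≤ d`, and `e ⋅ p ⋅ (d + 1) ≤ 1`, then with positive probability none of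
the events occurs. -/
theorem lovasz_local_lemma {Ω : Type*} [MeasurableSpace Ω]
    (P : Measure Ω) [IsProbabilityMeasure P]
    (M : ℕ) (B : Fin M → Set Ω) (hB : ∀ m, MeasurableSet (B m))
    (p : ℝ) (hp : ∀ m, P (B m) ≤ ENNReal.ofReal p)
    (d : ℕ) (Γ : Fin M → Finset (Fin M))
    (hΓ_self : ∀ m, m ∉ Γ m)
    (hΓ_card : ∀ m, (Γ m).card ≤ d)
    (h_indep : ∀ m, ∀ J : Finset (Fin M), m ∉ J → (∀ j ∈ J, j ∉ Γ m) →
      P (B m ∩ ⋂ j ∈ J, (B j)ᶜ) = P (B m) * P (⋂ j ∈ J, (B j)ᶜ))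
    (hLLL : Real.exp 1 * p * (d + 1) ≤ 1) :
    0 < P (⋂ m, (B m)ᶜ) :=
  lovasz_local_lemma_general P M B hB p hp d Γ hΓ_card h_indep hLLL
end

section
/- Quantum Lovász local lemma for bounded-degree k-QSAT: Let H_φ = Σ_{m=1}^M Π_m be a k-QSAT Hamiltonian on N qubits in which every qubit appears in at most 2^k/(e·k) clauses (e being Euler's constant). Then for every choice of the clause vectors φ_1, …, φ_M, the Hamiltonian has a nontrivial zero-energy subspace: dim ker H_φ ≥ 1. -/
open scoped BigOperators

noncomputable section

/-
Let `d T` be the dimension of the joint kernel of the clauses in `T` and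
`x = e / 2^k`. By strong induction on `T` one shows `(1 - x) d T ≤ d (T ∪ {m})`. The joint
kernel `V` of the clauses of `T` disjoint from `S m` is invariant under every operator acting on
the qubits of `S m`, so `V ≅ ℂ^(2^k) ⊗ V₀` and the rank-one projector `Π_m` maps `V` onto a space
of dimension at most `dim V / 2^k`. The clauses of `T` meeting `S m` are at most `p ≤ 2^k/e - 1`
neighbours of `m`; adding them one at a time (induction hypothesis) gives
`(1 - x)^p dim V ≤ d T`, and `(1 - x)^p ≥ 1/e` turns this into `d T - d (T ∪ {m}) ≤ x d T`.
Starting from `d ∅ = 2^N`, the whole system has `d ≥ (1 - x)^M 2^N > 0`.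
-/

open Module

section MatrixUnits

variable {K W : Type*} [Field K] [AddCommGroup W] [Module K W] [FiniteDimensional K W]

lemma Submodule.finrank_inf_ker_add_finrank_map {W' : Type*} [AddCommGroup W'] [Module K W']
    (f : W →ₗ[K] W') (U : Submodule K W) :
    finrank K ↥(U ⊓ LinearMap.ker f) + finrank K ↥(U.map f) = finrank K U := by
  have h := LinearMap.finrank_range_add_finrank_ker (f.domRestrict U)
  rwa [LinearMap.range_domRestrict, LinearMap.ker_domRestrict, ← Submodule.finrank_map_subtype_eq,
    Submodule.map_comap_subtype, add_comm] at h

omit [FiniteDimensional K W] in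
lemma Module.End.ker_mem_invtSubmodule_of_commute {f g : Module.End K W} (h : Commute f g) :
    LinearMap.ker g ∈ f.invtSubmodule := fun x hx => by
  rw [LinearMap.mem_ker] at hx
  rw [Submodule.mem_comap, LinearMap.mem_ker, ← Module.End.mul_apply, ← h.eq, Module.End.mul_apply,
    hx, map_zero]

variable {ι : Type*} [Fintype ι] [DecidableEq ι] {E : ι → ι → Module.End K W}
  {V : Submodule K W}

lemma card_mul_finrank_map_diag_le (hE : ∀ s t u v, E s t * E u v = if t = u then E s v else 0)
    (hV : ∀ s t, V ∈ (E s t).invtSubmodule) (s₀ : ι) :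
    Fintype.card ι * finrank K ↥(V.map (E s₀ s₀)) ≤ finrank K V := by
  have hE' : ∀ s t u v w, E s t (E u v w) = if t = u then E s v w else 0 := fun s t u v w => by
    rw [← Module.End.mul_apply, hE]; split_ifs <;> rfl
  set V₀ := V.map (E s₀ s₀)
  have hV₀ : V₀ ≤ V := (Module.End.mem_invtSubmodule_iff_map_le _).mp (hV s₀ s₀)
  -- `E s₀ s` recovers the `s`-th slot, so this embeds `ι → V₀` into `V`.
  let Ψ : (ι → V₀) →ₗ[K] W := ∑ s, E s s₀ ∘ₗ V₀.subtype ∘ₗ LinearMap.proj s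
  have hΨ : ∀ f, Ψ f = ∑ s, E s s₀ (f s) := fun f => by simp [Ψ]
  have hrange : LinearMap.range Ψ ≤ V := by
    rintro _ ⟨f, rfl⟩
    rw [hΨ]
    exact Submodule.sum_mem _ fun s _ => hV s s₀ (hV₀ (f s).2)
  have hinj : Function.Injective Ψ := by
    rw [← LinearMap.ker_eq_bot, eq_bot_iff]
    intro f hf
    ext s
    obtain ⟨y, -, hy⟩ := (f s).2
    have : E s₀ s (Ψ f) = f s := by
      simp [hΨ, hE', ← hy]
    rw [← this, LinearMap.mem_ker.mp hf, map_zero]; rfl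
  calc Fintype.card ι * finrank K V₀ = finrank K (ι → V₀) := by
        rw [Module.finrank_pi_fintype, Finset.sum_const, smul_eq_mul, Finset.card_univ]
    _ = finrank K (LinearMap.range Ψ) := (LinearMap.finrank_range_of_inj hinj).symm
    _ ≤ finrank K V := Submodule.finrank_mono hrange

lemma card_mul_finrank_map_rankOne_le [Nonempty ι]
    (hE : ∀ s t u v, E s t * E u v = if t = u then E s v else 0)
    (hV : ∀ s t, V ∈ (E s t).invtSubmodule) (a b : ι → K) :
    Fintype.card ι * finrank K ↥(V.map (∑ s, ∑ t, (a s * b t) • E s t)) ≤ finrank K V := by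
  obtain ⟨s₀⟩ := ‹Nonempty ι›
  set A := ∑ s, a s • E s s₀
  set B := ∑ t, b t • E s₀ t
  have hAB : ∑ s, ∑ t, (a s * b t) • E s t = A * B := by
    simp only [A, B, Finset.sum_mul, Finset.mul_sum, smul_mul_smul_comm, hE, if_true]
    exact Finset.sum_comm
  have hB : E s₀ s₀ * B = B := by
    simp only [B, Finset.mul_sum, mul_smul_comm, hE, if_true]
  have hBV : V.map B ≤ V.map (E s₀ s₀) := by
    rintro _ ⟨v, hv, rfl⟩
    refine ⟨B v, ?_, by rw [← Module.End.mul_apply, hB]⟩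
    simp only [B, LinearMap.sum_apply, LinearMap.smul_apply]
    exact Submodule.sum_mem _ fun t _ => Submodule.smul_mem _ _ (hV s₀ t hv)
  rw [hAB]
  calc Fintype.card ι * finrank K ↥(V.map (A * B))
      ≤ Fintype.card ι * finrank K ↥(V.map (E s₀ s₀)) := by
        gcongr
        rw [Module.End.mul_eq_comp, Submodule.map_comp]
        exact (Submodule.finrank_map_le _ _).trans (Submodule.finrank_mono hBV)
    _ ≤ finrank K V := card_mul_finrank_map_diag_le hE hV s₀

end MatrixUnits

section Overwrite

variable {α β : Type*} [DecidableEq α] {S R : Finset α}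

def overwrite (S : Finset α) (σ : α → β) (t : S → β) : α → β :=
  fun i => if h : i ∈ S then t ⟨i, h⟩ else σ i

@[simp] lemma restrict_overwrite (σ : α → β) (t : S → β) : S.restrict (overwrite S σ t) = t := by
  funext i; simp [overwrite, i.2]

@[simp] lemma overwrite_overwrite (σ : α → β) (t t' : S → β) :
    overwrite S (overwrite S σ t) t' = overwrite S σ t' := by
  funext i; simp only [overwrite]; split <;> rfl

lemma overwrite_restrict_eq_iff {σ τ : α → β} :
    overwrite S σ (S.restrict τ) = τ ↔ ∀ i ∉ S, σ i = τ i := by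
  refine ⟨fun h i hi => by rw [← h]; simp [overwrite, hi], fun h => funext fun i => ?_⟩
  by_cases hi : i ∈ S <;> simp [overwrite, hi, h]

lemma restrict_overwrite_of_disjoint (h : Disjoint S R) (σ : α → β) (u : R → β) :
    S.restrict (overwrite R σ u) = S.restrict σ := by
  funext i
  simp [overwrite, Finset.disjoint_left.mp h i.2]

lemma overwrite_comm_of_disjoint (h : Disjoint S R) (σ : α → β) (t : S → β) (u : R → β) :
    overwrite S (overwrite R σ u) t = overwrite R (overwrite S σ t) u := by
  funext i
  by_cases hS : i ∈ S
  · simp [overwrite, hS, Finset.disjoint_left.mp h hS]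
  · by_cases hR : i ∈ R <;> simp [overwrite, hS, hR]

lemma sum_overwrite_eq_sum [Fintype α] [Fintype β] {M : Type*} [AddCommMonoid M] (σ : α → β)
    {g : (α → β) → M} (hg : ∀ τ, g τ ≠ 0 → ∀ i ∉ S, σ i = τ i) :
    ∑ t : S → β, g (overwrite S σ t) = ∑ τ, g τ := by
  have hinj : Function.Injective (overwrite S σ) :=
    Function.LeftInverse.injective (g := S.restrict (π := fun _ => β))
      fun t => restrict_overwrite σ t
  refine Fintype.sum_of_injective _ hinj _ _ (fun τ hτ => ?_) fun _ => rfl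
  by_contra hgτ
  exact hτ ⟨S.restrict τ, overwrite_restrict_eq_iff.mpr (hg τ hgτ)⟩

end Overwrite

section UnitOp

variable {K α β : Type*} [Semiring K] [DecidableEq α] [DecidableEq β] {S R : Finset α}

/-- The matrix unit `|s⟩⟨t|` on the sites of `S`, tensored with the identity elsewhere. -/
def unitOp (S : Finset α) (s t : S → β) : Module.End K ((α → β) → K) where
  toFun x σ := if S.restrict σ = s then x (overwrite S σ t) else 0
  map_add' x y := by funext σ; split_ifs <;> simp [*]
  map_smul' c x := by funext σ; split_ifs <;> simp [*]

lemma unitOp_apply (s t : S → β) (x : (α → β) → K) (σ : α → β) :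
    unitOp S s t x σ = if S.restrict σ = s then x (overwrite S σ t) else 0 :=
  rfl

lemma unitOp_mul_unitOp (s t u v : S → β) :
    (unitOp S s t * unitOp S u v : Module.End K _) = if t = u then unitOp S s v else 0 := by
  ext x σ
  by_cases hs : S.restrict σ = s <;> by_cases htu : t = u <;> simp [unitOp_apply, hs, htu]

lemma commute_unitOp_of_disjoint (h : Disjoint S R) (s t : S → β) (u v : R → β) :
    Commute (unitOp S s t : Module.End K _) (unitOp R u v) := by
  ext x σ
  simp only [Module.End.mul_apply, unitOp_apply, restrict_overwrite_of_disjoint h,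
    restrict_overwrite_of_disjoint h.symm, overwrite_comm_of_disjoint h]
  split_ifs <;> rfl

end UnitOp

section ClauseProj

variable {N : ℕ} {S R : Finset (Fin N)}

lemma mulVecLin_clauseProj (φ : (S → Fin 2) → ℂ) :
    (clauseProj S φ).mulVecLin = ∑ s, ∑ t, (φ s * starRingEnd ℂ (φ t)) • unitOp S s t := by
  refine LinearMap.ext fun x => funext fun σ => ?_
  have hlhs : (clauseProj S φ).mulVecLin x σ =
      ∑ t, φ (S.restrict σ) * starRingEnd ℂ (φ t) * x (overwrite S σ t) := by
    rw [Matrix.mulVecLin_apply, Matrix.mulVec, dotProduct, ← sum_overwrite_eq_sum σ]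
    · refine Finset.sum_congr rfl fun t _ => ?_
      rw [clauseProj, if_pos (overwrite_restrict_eq_iff.mp (by simp)), one_mul]
      exact congrArg (fun u => φ (S.restrict σ) * starRingEnd ℂ (φ u) * x (overwrite S σ t))
        (restrict_overwrite σ t)
    · intro τ hτ
      by_contra h
      simp [clauseProj, h] at hτ
  rw [hlhs]
  simp only [LinearMap.sum_apply, LinearMap.smul_apply, Finset.sum_apply, Pi.smul_apply,
    unitOp_apply, smul_eq_mul, mul_ite, mul_zero]
  rw [Finset.sum_comm]
  simp [mul_assoc]

lemma commute_unitOp_clauseProj_of_disjoint (h : Disjoint S R) (s t : S → Fin 2)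
    (φ : (R → Fin 2) → ℂ) : Commute (unitOp S s t) (clauseProj R φ).mulVecLin := by
  rw [mulVecLin_clauseProj]
  exact Commute.sum_right _ _ _ fun u _ => Commute.sum_right _ _ _ fun v _ =>
    (commute_unitOp_of_disjoint h s t u v).smul_right _

end ClauseProj

lemma pow_card_mul_le_of_mul_le_insert {ι : Type*} [DecidableEq ι] (d : Finset ι → ℝ) {c : ℝ}
    (hc : 0 ≤ c) {A B : Finset ι} (hAB : Disjoint A B)
    (h : ∀ U ⊆ A ∪ B, ∀ j ∈ B, j ∉ U → c * d U ≤ d (insert j U)) :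
    c ^ B.card * d A ≤ d (A ∪ B) := by
  induction B using Finset.induction_on with
  | empty => simp
  | insert j B hjB ih =>
    have hjA : j ∉ A := Finset.disjoint_right.mp hAB (Finset.mem_insert_self j B)
    have hjU : j ∉ A ∪ B := by simp [hjA, hjB]
    have ih' := ih (Finset.disjoint_insert_right.mp hAB).2 fun U hU i hi =>
      h U (hU.trans (Finset.union_subset_union_right (Finset.subset_insert j B))) i
        (Finset.mem_insert_of_mem hi)
    rw [Finset.card_insert_of_notMem hjB, pow_succ', mul_assoc, Finset.union_insert]
    calc c * (c ^ B.card * d A) ≤ c * d (A ∪ B) := mul_le_mul_of_nonneg_left ih' hc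
      _ ≤ d (insert j (A ∪ B)) :=
        h _ (Finset.union_subset_union_right (Finset.subset_insert j B)) j
          (Finset.mem_insert_self j B) hjU

section JointKernel

variable {N M : ℕ} (S : Fin M → Finset (Fin N)) (φ : ∀ m, (S m → Fin 2) → ℂ)

def jointKer (T : Finset (Fin M)) : Submodule ℂ ((Fin N → Fin 2) → ℂ) :=
  T.inf fun m => LinearMap.ker (clauseProj (S m) (φ m)).mulVecLin

def clauseNeighbors (m : Fin M) : Finset (Fin M) :=
  {j | j ≠ m ∧ ¬Disjoint (S j) (S m)}

variable {S φ}

lemma finrank_jointKer_empty : finrank ℂ (jointKer S φ ∅) = 2 ^ N := by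
  rw [jointKer, Finset.inf_empty, finrank_top, Module.finrank_fintype_fun_eq_card,
    Fintype.card_fun, Fintype.card_fin, Fintype.card_fin]

lemma jointKer_insert (m : Fin M) (T : Finset (Fin M)) :
    jointKer S φ (insert m T) = LinearMap.ker (clauseProj (S m) (φ m)).mulVecLin ⊓ jointKer S φ T :=
  Finset.inf_insert

lemma jointKer_anti {T T' : Finset (Fin M)} (h : T ⊆ T') : jointKer S φ T' ≤ jointKer S φ T :=
  Finset.inf_mono h

lemma jointKer_univ_le_ker_qsatHam :
    jointKer S φ Finset.univ ≤ LinearMap.ker (qsatHam S φ).mulVecLin := by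
  intro v hv
  rw [LinearMap.mem_ker, qsatHam, ← Matrix.toLin'_apply', map_sum, LinearMap.sum_apply]
  exact Finset.sum_eq_zero fun m _ => by
    simpa using Submodule.mem_finsetInf.mp hv m (Finset.mem_univ m)

lemma jointKer_mem_invtSubmodule {R : Finset (Fin N)} {T : Finset (Fin M)}
    (hT : ∀ j ∈ T, Disjoint (S j) R) (s t : R → Fin 2) :
    jointKer S φ T ∈ (unitOp R s t).invtSubmodule := fun v hv => by
  simp only [jointKer, Submodule.mem_finsetInf] at hv
  rw [Submodule.mem_comap, jointKer, Submodule.mem_finsetInf]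
  exact fun j hj => Module.End.ker_mem_invtSubmodule_of_commute
    (commute_unitOp_clauseProj_of_disjoint (hT j hj).symm s t (φ j)) (hv j hj)

lemma finrank_jointKer_eq_finrank_insert_add (m : Fin M) (T : Finset (Fin M)) :
    finrank ℂ (jointKer S φ T) = finrank ℂ (jointKer S φ (insert m T)) +
      finrank ℂ ((jointKer S φ T).map (clauseProj (S m) (φ m)).mulVecLin) := by
  rw [jointKer_insert, inf_comm, Submodule.finrank_inf_ker_add_finrank_map]

lemma two_pow_card_mul_finrank_map_clauseProj_le {R : Finset (Fin N)} (ψ : (R → Fin 2) → ℂ)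
    {T : Finset (Fin M)} (hT : ∀ j ∈ T, Disjoint (S j) R) {U : Submodule ℂ ((Fin N → Fin 2) → ℂ)}
    (hU : U ≤ jointKer S φ T) :
    2 ^ R.card * finrank ℂ (U.map (clauseProj R ψ).mulVecLin) ≤ finrank ℂ (jointKer S φ T) := by
  have := card_mul_finrank_map_rankOne_le unitOp_mul_unitOp
    (jointKer_mem_invtSubmodule (φ := φ) hT) ψ fun t => starRingEnd ℂ (ψ t)
  rw [Fintype.card_fun, Fintype.card_coe, Fintype.card_fin, ← mulVecLin_clauseProj] at this
  exact (Nat.mul_le_mul_left _ (Submodule.finrank_mono (Submodule.map_mono hU))).trans this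

lemma filter_not_disjoint_subset_clauseNeighbors {m : Fin M} {T : Finset (Fin M)} (hmT : m ∉ T) :
    T.filter (fun j => ¬Disjoint (S j) (S m)) ⊆ clauseNeighbors S m := by
  intro j hj
  rw [Finset.mem_filter] at hj
  simp only [clauseNeighbors, Finset.mem_filter, Finset.mem_univ, true_and]
  exact ⟨fun h => hmT (h ▸ hj.1), hj.2⟩

end JointKernel

section LocalLemma

variable {N M : ℕ} {S : Fin M → Finset (Fin N)} {φ : ∀ m, (S m → Fin 2) → ℂ} {x : ℝ}

theorem one_sub_mul_finrank_jointKer_le (hx0 : 0 ≤ x) (hx1 : x ≤ 1)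
    (hlll : ∀ m, 1 ≤ 2 ^ (S m).card * x * (1 - x) ^ (clauseNeighbors S m).card)
    (T : Finset (Fin M)) (m : Fin M) :
    (1 - x) * finrank ℂ (jointKer S φ T) ≤ finrank ℂ (jointKer S φ (insert m T)) := by
  induction T using Finset.strongInduction generalizing m with
  | H T IH =>
  by_cases hmT : m ∈ T
  · rw [Finset.insert_eq_of_mem hmT]
    exact mul_le_of_le_one_left (Nat.cast_nonneg _) (by linarith)
  set lost := finrank ℂ ((jointKer S φ T).map (clauseProj (S m) (φ m)).mulVecLin)
  set Tfar := T.filter fun j => Disjoint (S j) (S m)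
  set Tnear := T.filter fun j => ¬Disjoint (S j) (S m)
  have hlost : (2 : ℝ) ^ (S m).card * lost ≤ finrank ℂ (jointKer S φ Tfar) := by
    exact_mod_cast two_pow_card_mul_finrank_map_clauseProj_le (φ m)
      (fun j hj => (Finset.mem_filter.mp hj).2) (jointKer_anti (Finset.filter_subset _ T))
  have hpeel : (1 - x) ^ Tnear.card * finrank ℂ (jointKer S φ Tfar) ≤
      finrank ℂ (jointKer S φ T) := by
    have hT : Tfar ∪ Tnear = T := Finset.filter_union_filter_not_eq _ T
    have := pow_card_mul_le_of_mul_le_insert (fun U => (finrank ℂ (jointKer S φ U) : ℝ))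
      (sub_nonneg.mpr hx1) (Finset.disjoint_filter_filter_not T T _) fun U hU j hj hjU =>
        IH U ((Finset.ssubset_iff_of_subset (hT ▸ hU)).mpr
          ⟨j, Finset.mem_of_mem_filter j hj, hjU⟩) j
    rwa [hT] at this
  have hnear : 1 ≤ 2 ^ (S m).card * x * (1 - x) ^ Tnear.card :=
    (hlll m).trans <| mul_le_mul_of_nonneg_left (pow_le_pow_of_le_one (sub_nonneg.mpr hx1)
      (by linarith) (Finset.card_le_card (filter_not_disjoint_subset_clauseNeighbors hmT)))
      (by positivity)
  have hlost_le : (lost : ℝ) ≤ x * finrank ℂ (jointKer S φ T) :=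
    calc (lost : ℝ) ≤ 2 ^ (S m).card * x * (1 - x) ^ Tnear.card * lost :=
          le_mul_of_one_le_left (Nat.cast_nonneg _) hnear
      _ = x * ((1 - x) ^ Tnear.card * (2 ^ (S m).card * lost)) := by ring
      _ ≤ x * ((1 - x) ^ Tnear.card * finrank ℂ (jointKer S φ Tfar)) := by gcongr
      _ ≤ x * finrank ℂ (jointKer S φ T) := by gcongr
  rw [finrank_jointKer_eq_finrank_insert_add m T, Nat.cast_add] at hlost_le ⊢
  linarith

theorem one_le_kerDim_of_lll (hx0 : 0 ≤ x) (hx1 : x < 1)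
    (hlll : ∀ m, 1 ≤ 2 ^ (S m).card * x * (1 - x) ^ (clauseNeighbors S m).card) :
    1 ≤ kerDim S φ := by
  have hbound := pow_card_mul_le_of_mul_le_insert (fun U => (finrank ℂ (jointKer S φ U) : ℝ))
    (sub_nonneg.mpr hx1.le) (Finset.disjoint_empty_left Finset.univ) fun U _ j _ _ =>
      one_sub_mul_finrank_jointKer_le hx0 hx1.le hlll U j
  rw [Finset.empty_union, finrank_jointKer_empty, Finset.card_univ, Fintype.card_fin] at hbound
  have hpos : (0 : ℝ) < finrank ℂ (jointKer S φ Finset.univ) := by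
    refine lt_of_lt_of_le ?_ hbound
    have : 0 < 1 - x := by linarith
    positivity
  exact (Nat.cast_pos.mp hpos).trans_le (Submodule.finrank_mono jointKer_univ_le_ker_qsatHam)

end LocalLemma

lemma Real.exp_neg_one_le_one_sub_pow {x : ℝ} {p : ℕ} (hx : x < 1) (h : (p + 1) * x ≤ 1) :
    Real.exp (-1) ≤ (1 - x) ^ p := by
  have h1x : 0 < 1 - x := by linarith
  have hlog : -x / (1 - x) ≤ Real.log (1 - x) := by
    have := Real.one_sub_inv_le_log_of_pos h1x
    rwa [← one_div, one_sub_div h1x.ne', sub_sub_cancel_left] at this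
  rw [← Real.exp_log h1x, ← Real.exp_nat_mul, Real.exp_le_exp]
  calc (-1 : ℝ) ≤ p * (-x / (1 - x)) := by
        rw [mul_div_assoc', le_div_iff₀ h1x]; linarith
    _ ≤ p * Real.log (1 - x) := by gcongr

lemma Real.exp_one_ne_two_pow (k : ℕ) : Real.exp 1 ≠ 2 ^ k := by
  intro h
  rcases Nat.lt_or_ge k 2 with hk | hk
  · interval_cases k <;> linarith [Real.exp_one_gt_d9]
  · have : (2 : ℝ) ^ 2 ≤ 2 ^ k := pow_le_pow_right₀ (by norm_num) hk
    linarith [Real.exp_one_lt_d9]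

lemma card_clauseNeighbors_add_one_le {N M : ℕ} {S : Fin M → Finset (Fin N)} {m : Fin M}
    (hm : (S m).Nonempty) {D : ℝ}
    (hdeg : ∀ i, ((Finset.univ.filter fun j => i ∈ S j).card : ℝ) ≤ D) :
    ((clauseNeighbors S m).card + 1 : ℝ) ≤ (S m).card * D := by
  have hcover : insert m (clauseNeighbors S m) ⊆
      (S m).biUnion fun i => Finset.univ.filter fun j => i ∈ S j := by
    intro j hj
    obtain ⟨i, hi⟩ := hm
    rcases Finset.mem_insert.mp hj with rfl | hj
    · exact Finset.mem_biUnion.mpr ⟨i, hi, by simpa using hi⟩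
    · simp only [clauseNeighbors, Finset.mem_filter, Finset.mem_univ, true_and] at hj
      obtain ⟨i, hij, him⟩ := Finset.not_disjoint_iff.mp hj.2
      exact Finset.mem_biUnion.mpr ⟨i, him, by simpa using hij⟩
  have hcard : (clauseNeighbors S m).card + 1 ≤
      ∑ i ∈ S m, (Finset.univ.filter fun j => i ∈ S j).card := by
    rw [← Finset.card_insert_of_notMem (s := clauseNeighbors S m) (a := m)
      (by simp [clauseNeighbors])]
    exact (Finset.card_le_card hcover).trans Finset.card_biUnion_le
  calc ((clauseNeighbors S m).card + 1 : ℝ)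
      ≤ ∑ i ∈ S m, ((Finset.univ.filter fun j => i ∈ S j).card : ℝ) := by exact_mod_cast hcard
    _ ≤ ∑ _i ∈ S m, D := Finset.sum_le_sum fun i _ => hdeg i
    _ = (S m).card * D := by rw [Finset.sum_const, nsmul_eq_mul]

theorem one_le_kerDim_of_card_clauseNeighbors_le {N M k : ℕ} {S : Fin M → Finset (Fin N)}
    {φ : ∀ m, (S m → Fin 2) → ℂ} (hS : ∀ m, (S m).card = k)
    (hnbr : ∀ m, ((clauseNeighbors S m).card + 1) * Real.exp 1 ≤ 2 ^ k) :
    1 ≤ kerDim S φ := by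
  rcases isEmpty_or_nonempty (Fin M) with hM | ⟨⟨m₀⟩⟩
  · exact one_le_kerDim_of_lll le_rfl zero_lt_one isEmptyElim
  set x := Real.exp 1 / 2 ^ k
  have hx1 : x < 1 := by
    refine (div_lt_one (by positivity)).mpr (lt_of_le_of_ne ?_ (Real.exp_one_ne_two_pow k))
    exact (le_mul_of_one_le_left (Real.exp_pos 1).le (by simp)).trans (hnbr m₀)
  refine one_le_kerDim_of_lll (by positivity) hx1 fun m => ?_
  have hm : ((clauseNeighbors S m).card + 1) * x ≤ 1 := by
    rw [mul_div_assoc', div_le_one (by positivity)]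
    exact hnbr m
  calc (1 : ℝ) = Real.exp 1 * Real.exp (-1) := by rw [← Real.exp_add]; simp
    _ ≤ Real.exp 1 * (1 - x) ^ (clauseNeighbors S m).card := by
        gcongr
        exact Real.exp_neg_one_le_one_sub_pow hx1 hm
    _ = 2 ^ (S m).card * x * (1 - x) ^ (clauseNeighbors S m).card := by
        rw [hS m]
        simp only [x]
        field_simp

/-- **Quantum Lovász local lemma for bounded-degree `k`-QSAT.**  If every qubit
appears in at most `2^k / (e k)` clauses, then for every choice of (unit) clause
vectors the Hamiltonian has a nontrivial zero-energy subspace. -/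
theorem quantum_lovasz_local_lemma (N M k : ℕ) (hk : 0 < k)
    (S : Fin M → Finset (Fin N)) (hS : ∀ m, (S m).card = k)
    (hdeg : ∀ i : Fin N,
      ((Finset.univ.filter fun m : Fin M => i ∈ S m).card : ℝ) ≤
        2 ^ k / (Real.exp 1 * k)) :
    ∀ φ : ∀ m, ({i // i ∈ S m} → Fin 2) → ℂ, (∀ m, IsUnitVec (φ m)) →
      1 ≤ kerDim S φ := by
  intro φ _
  refine one_le_kerDim_of_card_clauseNeighbors_le hS fun m => ?_
  have hnbr := card_clauseNeighbors_add_one_le (Finset.card_pos.mp (hS m ▸ hk)) hdeg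
  have hD : (k : ℝ) * (2 ^ k / (Real.exp 1 * k)) = 2 ^ k / Real.exp 1 := by
    field_simp
  rwa [hS m, hD, le_div_iff₀ (Real.exp_pos 1)] at hnbr

end
end

section
/- Kernel of the propagation Hamiltonian consists exactly of history states: Let W be a finite-dimensional complex Hilbert space, T ≥ 1, and U_1, …, U_T unitaries on W. On ℂ^{T+1} ⊗ W define H_p = (1/2) Σ_{t=0}^{T−1} [ (|t⟩⟨t| + |t+1⟩⟨t+1|) ⊗ Id_W − |t+1⟩⟨t| ⊗ U_{t+1} − |t⟩⟨t+1| ⊗ U_{t+1}† ]. Then H_p is self-adjoint and positive semidefinite, and ker H_p = { Σ_{t=0}^{T} |t⟩ ⊗ (U_t U_{t−1} ⋯ U_1) ξ : ξ ∈ W } (with the empty product for t = 0 equal to Id_W); in particular dim ker H_p = dim W. -/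
/-!
Writing `(Dψ)(t) = ψ(t+1) - U_{t+1} ψ(t)`, a direct computation gives
`∑_s ⟪H_p ψ (s), χ (s)⟫ = ½ ∑_t ⟪Dψ (t), Dχ (t)⟫`, i.e. `H_p = ½ D†D`. Hence `H_p` is
self-adjoint and positive semidefinite, and `ker H_p = ker D`. A state is killed by `D` exactly
when `ψ(t+1) = U_{t+1} ψ(t)` for all `t`, i.e. when it is the history state of `ψ(0)`; since
`ξ ↦ (t ↦ U_t ⋯ U_1 ξ)` is injective, its image `ker H_p` has the dimension of `W`.
-/

open scoped BigOperators

noncomputable section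

/-- `histFun T U t` is the composite `U_t ∘ U_{t-1} ∘ ⋯ ∘ U_1` of the first `t`
circuit unitaries (the empty composite for `t = 0` being the identity). -/
def histFun {W : Type*} [NormedAddCommGroup W] [InnerProductSpace ℂ W]
    (T : ℕ) (U : Fin T → (W ≃ₗᵢ[ℂ] W)) : ℕ → W → W
  | 0 => id
  | n + 1 => if h : n < T then (fun w => U ⟨n, h⟩ (histFun T U n w)) else histFun T U n

/-- Feynman–Kitaev propagation Hamiltonian
`H_p = (1/2) ∑_{t=0}^{T-1} [(|t⟩⟨t| + |t+1⟩⟨t+1|) ⊗ 1 - |t+1⟩⟨t| ⊗ U_{t+1} - |t⟩⟨t+1| ⊗ U_{t+1}†]`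
acting on `ℂ^{T+1} ⊗ W`, realized as the space of functions `Fin (T+1) → W`. -/
def propHam {W : Type*} [NormedAddCommGroup W] [InnerProductSpace ℂ W]
    (T : ℕ) (U : Fin T → (W ≃ₗᵢ[ℂ] W)) :
    ((Fin (T + 1) → W) →ₗ[ℂ] (Fin (T + 1) → W)) :=
  (2 : ℂ)⁻¹ • ∑ t : Fin T,
    ((LinearMap.single ℂ (fun _ : Fin (T + 1) => W) t.castSucc) ∘ₗ
        ((LinearMap.proj t.castSucc : (∀ _ : Fin (T + 1), W) →ₗ[ℂ] W) -
          ((U t).symm.toLinearEquiv.toLinearMap ∘ₗ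
            (LinearMap.proj t.succ : (∀ _ : Fin (T + 1), W) →ₗ[ℂ] W))) +
      (LinearMap.single ℂ (fun _ : Fin (T + 1) => W) t.succ) ∘ₗ
        ((LinearMap.proj t.succ : (∀ _ : Fin (T + 1), W) →ₗ[ℂ] W) -
          ((U t).toLinearEquiv.toLinearMap ∘ₗ
            (LinearMap.proj t.castSucc : (∀ _ : Fin (T + 1), W) →ₗ[ℂ] W))))

open scoped InnerProductSpace

section InnerSums

variable {𝕜 E ι : Type*} [RCLike 𝕜] [NormedAddCommGroup E] [InnerProductSpace 𝕜 E] [Fintype ι]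

theorem sum_inner_single_left [DecidableEq ι] (a : ι) (v : E) (χ : ι → E) :
    ∑ s, ⟪Pi.single (M := fun _ => E) a v s, χ s⟫_𝕜 = ⟪v, χ a⟫_𝕜 := by
  rw [Finset.sum_eq_single a (fun s _ hs => by rw [Pi.single_eq_of_ne hs, inner_zero_left])
    (by simp)]
  simp

theorem sum_inner_self_eq_zero_iff (f : ι → E) : ∑ s, ⟪f s, f s⟫_𝕜 = 0 ↔ f = 0 := by
  rw [← PiLp.inner_apply (WithLp.toLp 2 f) (WithLp.toLp 2 f), inner_self_eq_zero]
  exact ⟨fun h => by simpa using congrArg WithLp.ofLp h, fun h => by simp [h]⟩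

end InnerSums

section PropagationHamiltonian

variable {W : Type*} [NormedAddCommGroup W] [InnerProductSpace ℂ W] (T : ℕ)
  (U : Fin T → (W ≃ₗᵢ[ℂ] W))

-- The unitaries are indexed from `0`: `U t` is the paper's `U_{t+1}`.
def propDiff (ψ : Fin (T + 1) → W) (t : Fin T) : W :=
  ψ t.succ - U t (ψ t.castSucc)

theorem propHam_apply (ψ : Fin (T + 1) → W) :
    propHam T U ψ = (2 : ℂ)⁻¹ • ∑ t : Fin T,
      (Pi.single t.castSucc (ψ t.castSucc - (U t).symm (ψ t.succ)) +
        Pi.single t.succ (propDiff T U ψ t)) := by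
  simp [propHam, propDiff, LinearMap.sum_apply]

theorem sum_inner_propHam (ψ χ : Fin (T + 1) → W) :
    ∑ s, ⟪propHam T U ψ s, χ s⟫_ℂ =
      (2 : ℂ)⁻¹ * ∑ t, ⟪propDiff T U ψ t, propDiff T U χ t⟫_ℂ := by
  have adjoint_step (t : Fin T) : ⟪ψ t.castSucc - (U t).symm (ψ t.succ), χ t.castSucc⟫_ℂ =
      -⟪propDiff T U ψ t, U t (χ t.castSucc)⟫_ℂ := by
    rw [← (U t).inner_map_map, map_sub, LinearIsometryEquiv.apply_symm_apply, ← neg_sub,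
      inner_neg_left, propDiff]
  simp only [propHam_apply, Pi.smul_apply, Finset.sum_apply, Pi.add_apply, inner_smul_left,
    sum_inner, inner_add_left, Finset.sum_add_distrib, ← Finset.mul_sum]
  rw [Finset.sum_comm, Finset.sum_comm (γ := Fin (T + 1)), ← Finset.sum_add_distrib]
  simp only [sum_inner_single_left, adjoint_step, Complex.conj_inv, Complex.conj_ofNat]
  congr 1
  refine Finset.sum_congr rfl fun t _ => ?_
  simp only [propDiff, inner_sub_right]
  ring

theorem sum_inner_propHam_comm (ψ χ : Fin (T + 1) → W) :
    ∑ s, ⟪propHam T U ψ s, χ s⟫_ℂ = ∑ s, ⟪ψ s, propHam T U χ s⟫_ℂ := by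
  have conj_swap : ∑ s, ⟪ψ s, propHam T U χ s⟫_ℂ =
      starRingEnd ℂ (∑ s, ⟪propHam T U χ s, ψ s⟫_ℂ) := by
    simp only [map_sum, inner_conj_symm]
  rw [conj_swap, sum_inner_propHam, sum_inner_propHam, map_mul, map_sum]
  simp only [inner_conj_symm, map_inv₀, Complex.conj_ofNat]

theorem re_sum_inner_propHam_nonneg (ψ : Fin (T + 1) → W) :
    0 ≤ (∑ s, ⟪ψ s, propHam T U ψ s⟫_ℂ).re := by
  rw [← sum_inner_propHam_comm, sum_inner_propHam, show (2 : ℂ)⁻¹ = ((2⁻¹ : ℝ) : ℂ) by simp,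
    Complex.re_ofReal_mul, Complex.re_sum]
  exact mul_nonneg (by norm_num) (Finset.sum_nonneg fun t _ => inner_self_nonneg (𝕜 := ℂ))

theorem propHam_eq_zero_iff (ψ : Fin (T + 1) → W) :
    propHam T U ψ = 0 ↔ propDiff T U ψ = 0 := by
  constructor
  · intro h
    rw [← sum_inner_self_eq_zero_iff (𝕜 := ℂ)]
    simpa [h] using sum_inner_propHam T U ψ ψ
  · intro h
    rw [← sum_inner_self_eq_zero_iff (𝕜 := ℂ), sum_inner_propHam, h]
    simp

end PropagationHamiltonian

section HistoryStates

variable {W : Type*} [NormedAddCommGroup W] [InnerProductSpace ℂ W] (T : ℕ)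
  (U : Fin T → (W ≃ₗᵢ[ℂ] W))

theorem histFun_succ (t : Fin T) (ξ : W) :
    histFun T U (t + 1) ξ = U t (histFun T U t ξ) := by
  simp [histFun, t.isLt]

theorem histFun_isLinearMap (n : ℕ) : IsLinearMap ℂ (histFun T U n) := by
  induction n with
  | zero => exact LinearMap.id.isLinear
  | succ n ih =>
    unfold histFun
    split_ifs
    · exact ((U _).toLinearMap.comp (ih.mk' _)).isLinear
    · exact ih

def histState : W →ₗ[ℂ] (Fin (T + 1) → W) :=
  LinearMap.pi fun t => (histFun_isLinearMap T U t).mk' _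

theorem histState_injective : Function.Injective (histState T U) :=
  fun _ _ h => congrFun h 0

theorem propDiff_eq_zero_iff (ψ : Fin (T + 1) → W) :
    propDiff T U ψ = 0 ↔ ∃ ξ : W, ψ = fun t => histFun T U t.val ξ := by
  constructor
  · intro h
    refine ⟨ψ 0, funext fun t => ?_⟩
    induction t using Fin.induction with
    | zero => rfl
    | succ t ih =>
      rw [sub_eq_zero.mp (congrFun h t), ih, Fin.val_succ, histFun_succ, Fin.val_castSucc]
  · rintro ⟨ξ, rfl⟩
    funext t
    simp [propDiff, histFun_succ]

theorem mem_ker_propHam_iff (ψ : Fin (T + 1) → W) :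
    ψ ∈ LinearMap.ker (propHam T U) ↔ ∃ ξ : W, ψ = fun t => histFun T U t.val ξ :=
  (propHam_eq_zero_iff T U ψ).trans (propDiff_eq_zero_iff T U ψ)

theorem ker_propHam_eq_range : LinearMap.ker (propHam T U) = LinearMap.range (histState T U) := by
  ext ψ
  rw [mem_ker_propHam_iff, LinearMap.mem_range]
  exact exists_congr fun _ => eq_comm

end HistoryStates

theorem propHam_kernel_general {W : Type*} [NormedAddCommGroup W] [InnerProductSpace ℂ W]
    (T : ℕ) (U : Fin T → (W ≃ₗᵢ[ℂ] W)) :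
    (∀ ψ χ : Fin (T + 1) → W,
      ∑ t, (inner ℂ (propHam T U ψ t) (χ t) : ℂ) =
        ∑ t, (inner ℂ (ψ t) (propHam T U χ t) : ℂ)) ∧
    (∀ ψ : Fin (T + 1) → W, 0 ≤ (∑ t, (inner ℂ (ψ t) (propHam T U ψ t) : ℂ)).re) ∧
    ((LinearMap.ker (propHam T U) : Set (Fin (T + 1) → W)) =
      {ψ | ∃ ξ : W, ψ = fun t => histFun T U t.val ξ}) ∧
    Module.finrank ℂ (LinearMap.ker (propHam T U)) = Module.finrank ℂ W := by
  refine ⟨sum_inner_propHam_comm T U, re_sum_inner_propHam_nonneg T U,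
    Set.ext (mem_ker_propHam_iff T U), ?_⟩
  rw [ker_propHam_eq_range, LinearMap.finrank_range_of_inj (histState_injective T U)]

/-- **Kernel of the propagation Hamiltonian.**  `H_p` is self-adjoint and positive
semidefinite (with respect to the tensor-product inner product
`⟪ψ, χ⟫ = ∑_t ⟪ψ t, χ t⟫`), its kernel consists exactly of the history states
`∑_t |t⟩ ⊗ U_t ⋯ U_1 ξ`, and `dim ker H_p = dim W`. -/
theorem propHam_kernel {W : Type*} [NormedAddCommGroup W] [InnerProductSpace ℂ W]
    [FiniteDimensional ℂ W] (T : ℕ) (hT : 1 ≤ T) (U : Fin T → (W ≃ₗᵢ[ℂ] W)) :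
    (∀ ψ χ : Fin (T + 1) → W,
      ∑ t, (inner ℂ (propHam T U ψ t) (χ t) : ℂ) =
        ∑ t, (inner ℂ (ψ t) (propHam T U χ t) : ℂ)) ∧
    (∀ ψ : Fin (T + 1) → W, 0 ≤ (∑ t, (inner ℂ (ψ t) (propHam T U ψ t) : ℂ)).re) ∧
    ((LinearMap.ker (propHam T U) : Set (Fin (T + 1) → W)) =
      {ψ | ∃ ξ : W, ψ = fun t => histFun T U t.val ξ}) ∧
    Module.finrank ℂ (LinearMap.ker (propHam T U)) = Module.finrank ℂ W :=
  propHam_kernel_general T U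

end
end

section
/- Spectral gap of the propagation Hamiltonian: With H_p built from unitaries U_1, …, U_T on W as above, the smallest nonzero eigenvalue of H_p equals 1 − cos(π/(T+1)), and in particular it is at least 2/(T+1)². Hence H_p has a spectral gap of order 1/T² above its zero-energy (history-state) subspace. -/
open scoped BigOperators

noncomputable section

/-!
Gauging the clock site `t` by the history isometry `U_t ⋯ U_1` turns `H_p` into `H₀ ⊗ 1`,
where `H₀` is the same operator with all `U_t = 1` on `W = ℂ`, i.e. half the Laplacian of
the path on `T + 1` vertices. Concretely, an eigenvector `c` of `H₀` and any `w ≠ 0` give the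
eigenvector `s ↦ c s • U_s ⋯ U_1 w` of `H_p`, and pairing an eigenvector of `H_p` site by site
with a fixed gauged vector gives back an eigenvector of `H₀`; so `H_p` and `H₀` have the same
eigenvalues. The cosine modes `cos ((2s+1) k π / (2(T+1)))`, `k = 0, …, T`, are eigenvectors
of `H₀` with the `T + 1` distinct eigenvalues `1 - cos (k π / (T+1))`, which therefore exhaust
its spectrum. The gap is the value at `k = 1`, and `1 - cos x ≥ 2 x² / π²` on `[-π, π]`.
-/

open Real

theorem Module.End.HasEigenvalue.mem_range_of_finrank_le {K V ι : Type*} [Field K]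
    [AddCommGroup V] [Module K V] [FiniteDimensional K V] [Fintype ι] {f : Module.End K V}
    {eig : ι → K} (hinj : Function.Injective eig) (heig : ∀ i, f.HasEigenvalue (eig i))
    (hcard : Module.finrank K V ≤ Fintype.card ι) {μ : K} (hμ : f.HasEigenvalue μ) :
    μ ∈ Set.range eig := by
  by_contra hμ_eig
  have hinj' : Function.Injective fun o : Option ι => o.elim μ eig := by
    rintro (_ | i) (_ | j) h
    · rfl
    · exact absurd ⟨j, h.symm⟩ hμ_eig
    · exact absurd ⟨i, h⟩ hμ_eig
    · exact congrArg some (hinj h)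
  have hvec (o : Option ι) : ∃ v, f.HasEigenvector (o.elim μ eig) v := by
    cases o with
    | none => exact hμ.exists_hasEigenvector
    | some i => exact (heig i).exists_hasEigenvector
  choose v hv using hvec
  have := (f.eigenvectors_linearIndependent' _ hinj' v hv).fintype_card_le_finrank
  simp only [Fintype.card_option] at this
  omega

theorem two_div_sq_le_one_sub_cos_pi_div {x : ℝ} (hx : 1 ≤ x) :
    2 / x ^ 2 ≤ 1 - Real.cos (π / x) := by
  have hπx : |π / x| ≤ π := by
    rw [abs_of_pos (by positivity), div_le_iff₀ (by positivity)]
    nlinarith [Real.pi_pos]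
  have h := Real.cos_le_one_sub_mul_cos_sq hπx
  have he : 2 / π ^ 2 * (π / x) ^ 2 = 2 / x ^ 2 := by field_simp
  linarith

section

variable {W W' : Type*} [NormedAddCommGroup W] [InnerProductSpace ℂ W]
  [NormedAddCommGroup W'] [InnerProductSpace ℂ W'] {T : ℕ}

theorem propHam_eq_sum (U : Fin T → (W ≃ₗᵢ[ℂ] W)) (ψ : Fin (T + 1) → W) :
    propHam T U ψ = (2 : ℂ)⁻¹ • ∑ t : Fin T,
      (Pi.single t.castSucc (ψ t.castSucc - (U t).symm (ψ t.succ)) +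
        Pi.single t.succ (ψ t.succ - U t (ψ t.castSucc))) := by
  simp [propHam]

theorem propHam_intertwine (U : Fin T → (W ≃ₗᵢ[ℂ] W)) (U' : Fin T → (W' ≃ₗᵢ[ℂ] W'))
    (f : Fin (T + 1) → W →ₗ[ℂ] W')
    (hf : ∀ t x, f t.succ (U t x) = U' t (f t.castSucc x)) (ψ : Fin (T + 1) → W) :
    propHam T U' (fun s => f s (ψ s)) = fun s => f s (propHam T U ψ s) := by
  have hf' (t : Fin T) (y : W) : f t.castSucc ((U t).symm y) = (U' t).symm (f t.succ y) := by
    rw [LinearIsometryEquiv.eq_symm_apply, ← hf, LinearIsometryEquiv.apply_symm_apply]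
  funext s
  simp only [propHam_eq_sum, Pi.smul_apply, Finset.sum_apply, Pi.add_apply, map_smul, map_sum,
    map_add, Pi.apply_single (fun i => f i) (fun i => map_zero (f i)), map_sub, hf, hf']

/-- `histFun` bundled as a linear isometry equivalence, so that its inverse is available. -/
def histEquiv (T : ℕ) (U : Fin T → (W ≃ₗᵢ[ℂ] W)) : ℕ → (W ≃ₗᵢ[ℂ] W)
  | 0 => LinearIsometryEquiv.refl ℂ W
  | n + 1 => if h : n < T then (histEquiv T U n).trans (U ⟨n, h⟩) else histEquiv T U n

theorem histEquiv_succ (U : Fin T → (W ≃ₗᵢ[ℂ] W)) (t : Fin T) :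
    histEquiv T U (t + 1) = (histEquiv T U t).trans (U t) := by
  simp [histEquiv]

end

abbrev pathHam (T : ℕ) : Module.End ℂ (Fin (T + 1) → ℂ) :=
  propHam T fun _ => LinearIsometryEquiv.refl ℂ ℂ

theorem pathHam_apply_of_reflecting {T : ℕ} (c : ℤ → ℂ) (h0 : c (-1) = c 0)
    (hT : c (T + 1) = c T) (s : Fin (T + 1)) :
    pathHam T (fun s => c s) s = 2⁻¹ * ((c s - c (s + 1)) + (c s - c (s - 1))) := by
  have hsymm (z : ℂ) : (LinearIsometryEquiv.refl ℂ ℂ).symm z = z := rfl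
  rw [propHam_eq_sum, Pi.smul_apply, smul_eq_mul, Finset.sum_apply]
  simp only [Pi.add_apply, Finset.sum_add_distrib, LinearIsometryEquiv.coe_refl, id, hsymm]
  congr 2
  · induction s using Fin.lastCases with
    | last => simp [hT]
    | cast i => simp [Pi.single_apply]
  · induction s using Fin.cases with
    | zero => simp [h0]
    | succ i => simp [Pi.single_apply]

def cosMode (u : ℝ) (n : ℤ) : ℂ := (Real.cos ((2 * n + 1) * u) : ℝ)

theorem cosMode_neg_one (u : ℝ) : cosMode u (-1) = cosMode u 0 := by
  have h : (2 * ((-1 : ℤ) : ℝ) + 1) * u = -((2 * ((0 : ℤ) : ℝ) + 1) * u) := by push_cast; ring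
  rw [cosMode, cosMode, h, Real.cos_neg]

theorem cosMode_reflect {T k : ℕ} {u : ℝ} (hu : 2 * (T + 1) * u = k * π) :
    cosMode u (T + 1) = cosMode u T := by
  have h₁ : (2 * ((T : ℤ) + 1 : ℤ) + 1 : ℝ) * u = k * π - -u := by
    push_cast; linear_combination hu
  have h₂ : (2 * (T : ℤ) + 1 : ℝ) * u = k * π - u := by push_cast; linear_combination hu
  rw [cosMode, cosMode, h₁, h₂, Real.cos_nat_mul_pi_sub, Real.cos_nat_mul_pi_sub, Real.cos_neg]

theorem cosMode_second_difference (u : ℝ) (n : ℤ) :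
    (cosMode u n - cosMode u (n + 1)) + (cosMode u n - cosMode u (n - 1)) =
      2 * (1 - Real.cos (2 * u) : ℝ) * cosMode u n := by
  have h₁ : (2 * ((n + 1 : ℤ) : ℝ) + 1) * u = (2 * n + 1) * u + 2 * u := by push_cast; ring
  have h₂ : (2 * ((n - 1 : ℤ) : ℝ) + 1) * u = (2 * n + 1) * u - 2 * u := by push_cast; ring
  simp only [cosMode, h₁, h₂, Real.cos_add, Real.cos_sub]
  push_cast
  ring

def pathEigenvalue (T k : ℕ) : ℝ := 1 - Real.cos (k * π / (T + 1))

theorem pathHam_hasEigenvector {T k : ℕ} (hk : k ≤ T) :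
    (pathHam T).HasEigenvector (pathEigenvalue T k)
      (fun s => cosMode (k * π / (2 * (T + 1))) s) := by
  set u : ℝ := k * π / (2 * (T + 1)) with hu_def
  have hu : 2 * (T + 1) * u = k * π := by rw [hu_def]; field_simp
  have heig : pathEigenvalue T k = 1 - Real.cos (2 * u) := by
    rw [pathEigenvalue, hu_def]; congr 2; field_simp
  refine ⟨Module.End.mem_eigenspace_iff.mpr ?_, fun h => ?_⟩
  · funext s
    rw [pathHam_apply_of_reflecting _ (cosMode_neg_one u) (cosMode_reflect hu),
      cosMode_second_difference, heig, Pi.smul_apply, smul_eq_mul]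
    ring
  · have h0 := congrFun h 0
    have hpos : 0 < Real.cos u := by
      apply Real.cos_pos_of_mem_Ioo
      constructor
      · have : 0 ≤ u := by positivity
        linarith [Real.pi_pos]
      · rw [hu_def, div_lt_div_iff₀ (by positivity) (by norm_num)]
        have : (k : ℝ) < T + 1 := by exact_mod_cast Nat.lt_succ_of_le hk
        nlinarith [Real.pi_pos]
    simp only [cosMode, Fin.val_zero, Nat.cast_zero, Int.cast_zero, mul_zero, zero_add, one_mul,
      Pi.zero_apply, Complex.ofReal_eq_zero] at h0
    exact hpos.ne' h0

theorem pathEigenvalue_strictMono (T : ℕ) :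
    StrictMono fun k : Fin (T + 1) => pathEigenvalue T k := by
  intro j k hjk
  have hT : (0 : ℝ) < T + 1 := by positivity
  have hk : (k : ℝ) ≤ T + 1 := by exact_mod_cast k.is_lt.le
  have hjk' : (j : ℝ) < k := by exact_mod_cast hjk
  simp only [pathEigenvalue, sub_lt_sub_iff_left]
  apply Real.cos_lt_cos_of_nonneg_of_le_pi (by positivity)
  · rw [div_le_iff₀ hT]; nlinarith [Real.pi_pos]
  · gcongr

theorem pathHam_hasEigenvalue_iff {T : ℕ} {μ : ℂ} :
    (pathHam T).HasEigenvalue μ ↔ ∃ k : Fin (T + 1), μ = pathEigenvalue T k := by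
  have heig (k : Fin (T + 1)) : (pathHam T).HasEigenvalue (pathEigenvalue T k) :=
    Module.End.hasEigenvalue_of_hasEigenvector
      (pathHam_hasEigenvector (Nat.lt_succ_iff.mp k.is_lt))
  refine ⟨fun hμ => ?_, fun ⟨k, hk⟩ => hk ▸ heig k⟩
  obtain ⟨k, hk⟩ := hμ.mem_range_of_finrank_le
    (Complex.ofReal_injective.comp (pathEigenvalue_strictMono T).injective) heig (by simp)
  exact ⟨k, hk.symm⟩

section

variable {W : Type*} [NormedAddCommGroup W] [InnerProductSpace ℂ W] {T : ℕ}

theorem hasEigenvalue_propHam_of_pathHam [Nontrivial W] (U : Fin T → (W ≃ₗᵢ[ℂ] W))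
    {μ : ℂ} (hμ : (pathHam T).HasEigenvalue μ) : Module.End.HasEigenvalue (propHam T U) μ := by
  obtain ⟨c, hc, hc0⟩ := hμ.exists_hasEigenvector
  obtain ⟨w, hw⟩ := exists_ne (0 : W)
  let f (s : Fin (T + 1)) : ℂ →ₗ[ℂ] W := LinearMap.toSpanSingleton ℂ W (histEquiv T U s w)
  have hf (t : Fin T) (z : ℂ) : f t.succ z = U t (f t.castSucc z) := by
    simp [f, histEquiv_succ]
  refine Module.End.hasEigenvalue_of_hasEigenvector (x := fun s => f s (c s)) ⟨?_, ?_⟩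
  · rw [Module.End.mem_eigenspace_iff,
      propHam_intertwine (fun _ => LinearIsometryEquiv.refl ℂ ℂ) U f hf,
      Module.End.mem_eigenspace_iff.mp hc]
    funext s
    simp only [Pi.smul_apply, map_smul]
  · obtain ⟨s, hs⟩ := Function.ne_iff.mp hc0
    refine Function.ne_iff.mpr ⟨s, ?_⟩
    simpa [f, hw] using hs

theorem hasEigenvalue_pathHam_of_propHam (U : Fin T → (W ≃ₗᵢ[ℂ] W))
    {μ : ℂ} (hμ : Module.End.HasEigenvalue (propHam T U) μ) : (pathHam T).HasEigenvalue μ := by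
  obtain ⟨ψ, hψ, hψ0⟩ := hμ.exists_hasEigenvector
  obtain ⟨s₀, hs₀⟩ := Function.ne_iff.mp hψ0
  set φ := (histEquiv T U s₀).symm (ψ s₀)
  let f (s : Fin (T + 1)) : W →ₗ[ℂ] ℂ :=
    innerₛₗ ℂ φ ∘ₗ (histEquiv T U s).symm.toLinearEquiv.toLinearMap
  have hf (t : Fin T) (x : W) : f t.succ (U t x) = f t.castSucc x := by
    simp [f, histEquiv_succ]
  refine Module.End.hasEigenvalue_of_hasEigenvector (x := fun s => f s (ψ s)) ⟨?_, ?_⟩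
  · rw [Module.End.mem_eigenspace_iff, propHam_intertwine U _ f hf,
      Module.End.mem_eigenspace_iff.mp hψ]
    funext s
    simp only [Pi.smul_apply, map_smul]
  · refine Function.ne_iff.mpr ⟨s₀, ?_⟩
    simpa [f, φ] using hs₀

theorem hasEigenvalue_propHam_iff [Nontrivial W] (U : Fin T → (W ≃ₗᵢ[ℂ] W)) {μ : ℂ} :
    Module.End.HasEigenvalue (propHam T U) μ ↔ ∃ k : Fin (T + 1), μ = pathEigenvalue T k :=
  ⟨fun h => pathHam_hasEigenvalue_iff.mp (hasEigenvalue_pathHam_of_propHam U h),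
    fun h => hasEigenvalue_propHam_of_pathHam U (pathHam_hasEigenvalue_iff.mpr h)⟩

end

theorem propHam_gap_general {W : Type*} [NormedAddCommGroup W] [InnerProductSpace ℂ W]
    [Nontrivial W] (T : ℕ) (hT : 1 ≤ T)
    (U : Fin T → (W ≃ₗᵢ[ℂ] W)) :
    Module.End.HasEigenvalue (propHam T U)
      ((1 - Real.cos (Real.pi / ((T : ℝ) + 1)) : ℝ) : ℂ) ∧
    (∀ μ : ℂ, Module.End.HasEigenvalue (propHam T U) μ → μ ≠ 0 →
      1 - Real.cos (Real.pi / ((T : ℝ) + 1)) ≤ μ.re) ∧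
    2 / ((T : ℝ) + 1) ^ 2 ≤ 1 - Real.cos (Real.pi / ((T : ℝ) + 1)) := by
  have hgap : pathEigenvalue T 1 = 1 - Real.cos (π / (T + 1)) := by simp [pathEigenvalue]
  rw [← hgap]
  refine ⟨(hasEigenvalue_propHam_iff U).mpr ⟨⟨1, by omega⟩, rfl⟩, fun μ hμ hμ0 => ?_,
    hgap ▸ two_div_sq_le_one_sub_cos_pi_div (le_add_of_nonneg_left T.cast_nonneg)⟩
  obtain ⟨k, rfl⟩ := (hasEigenvalue_propHam_iff U).mp hμ
  have hk : (⟨1, by omega⟩ : Fin (T + 1)) ≤ k := by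
    refine Fin.mk_le_of_le_val (Nat.one_le_iff_ne_zero.mpr fun hk0 => hμ0 ?_)
    simp [pathEigenvalue, hk0]
  simpa using (pathEigenvalue_strictMono T).monotone hk

/-- **Spectral gap of the propagation Hamiltonian.**  The smallest nonzero eigenvalue
of `H_p` equals `1 - cos(π/(T+1))`, which is at least `2/(T+1)²`; hence `H_p` has a
spectral gap of order `1/T²` above its zero-energy (history-state) subspace. -/
theorem propHam_gap {W : Type*} [NormedAddCommGroup W] [InnerProductSpace ℂ W]
    [FiniteDimensional ℂ W] [Nontrivial W] (T : ℕ) (hT : 1 ≤ T)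
    (U : Fin T → (W ≃ₗᵢ[ℂ] W)) :
    Module.End.HasEigenvalue (propHam T U)
      ((1 - Real.cos (Real.pi / ((T : ℝ) + 1)) : ℝ) : ℂ) ∧
    (∀ μ : ℂ, Module.End.HasEigenvalue (propHam T U) μ → μ ≠ 0 →
      1 - Real.cos (Real.pi / ((T : ℝ) + 1)) ≤ μ.re) ∧
    2 / ((T : ℝ) + 1) ^ 2 ≤ 1 - Real.cos (Real.pi / ((T : ℝ) + 1)) :=
  propHam_gap_general T hT U

end
end
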